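/- arXiv:1803.05256 — 10 statements merged into one kernel-verified Lean document; each statement's English description precedes it below -/
import Mathlib

section
/- Let h : ℝ^n → ℝ ∪ {∞} be proper, closed, convex, and γ > 0. Then for all y ∈ ℝ^n, the Moreau identity holds: y = prox_{γh}(y) + γ · prox_{γ^{-1} h*}(γ^{-1} y), where h* is the Fenchel conjugate of h. -/
open scoped InnerProductSpace RealInnerProductSpace
open Filter Topology

noncomputable section

abbrev E (n : ℕ) := EuclideanSpace ℝ (Fin n)

/-- Convexity for extended-real-valued functions. -/
def EConvexOn {n : ℕ} (f : E n → EReal) : Prop :=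
  ∀ x y : E n, ∀ a b : ℝ, 0 ≤ a → 0 ≤ b → a + b = 1 →
    f (a • x + b • y) ≤ (a : EReal) * f x + (b : EReal) * f y

def ProperFun {n : ℕ} (f : E n → EReal) : Prop :=
  (∃ x, f x ≠ ⊤) ∧ ∀ x, f x ≠ ⊥

def ProperClosedConvex {n : ℕ} (f : E n → EReal) : Prop :=
  ProperFun f ∧ LowerSemicontinuous f ∧ EConvexOn f

/-- `f` is strongly convex with modulus `μ`: `f - (μ/2)‖·‖²` is convex. -/
def StronglyConvexWithMod {n : ℕ} (μ : ℝ) (f : E n → EReal) : Prop :=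
  EConvexOn (fun x => f x - ((μ / 2 * ‖x‖ ^ 2 : ℝ) : EReal))

/-- Fenchel conjugate. -/
def conjFn {n : ℕ} (f : E n → EReal) (y : E n) : EReal :=
  ⨆ x : E n, ((⟪x, y⟫_ℝ : ℝ) : EReal) - f x

/-- Convex subdifferential. -/
def Subdiff {n : ℕ} (f : E n → EReal) (x : E n) : Set (E n) :=
  {v | ∀ z, f x + ((⟪v, z - x⟫_ℝ : ℝ) : EReal) ≤ f z}

/-- `p` is the proximal point of `x` for `h` with stepsize `γ`. -/
def IsProx {n : ℕ} (γ : ℝ) (h : E n → EReal) (x p : E n) : Prop :=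
  ∀ z : E n, h p + ((1 / (2 * γ) * ‖p - x‖ ^ 2 : ℝ) : EReal) ≤
    h z + ((1 / (2 * γ) * ‖z - x‖ ^ 2 : ℝ) : EReal)

/-- Moreau envelope. -/
def moreauEnv {n : ℕ} (γ : ℝ) (h : E n → EReal) (x : E n) : EReal :=
  ⨅ z : E n, h z + ((1 / (2 * γ) * ‖z - x‖ ^ 2 : ℝ) : EReal)

/-- Dual objective `ψ(y) = f*(-Aᵀy) + g*(y)`. -/
def dualObj {n m : ℕ} (f : E n → EReal) (g : E m → EReal) (A : E n →L[ℝ] E m)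
    (y : E m) : EReal :=
  conjFn f (-(ContinuousLinearMap.adjoint A y)) + conjFn g y

/-- The alternating minimization envelope `ψ_γ(y) = -L_γ(x(y), z_γ(y), y)`. -/
def AME {n m : ℕ} (f : E n → EReal) (g : E m → EReal) (A : E n →L[ℝ] E m)
    (γ : ℝ) (xmin : E m → E n) (zmin : E m → E m) (y : E m) : EReal :=
  -(f (xmin y) + g (zmin y)
    + ((⟪y, A (xmin y) - zmin y⟫_ℝ + γ / 2 * ‖A (xmin y) - zmin y‖ ^ 2 : ℝ) : EReal))

/-! The optimality condition for `p y = prox_{γh}(y)`, tested along segments issuing from `p y` and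
in the limit of short segments, says that `u = γ⁻¹ (y - p y)` is a subgradient of `h` at `p y`.
By the equality case of Fenchel–Young, `p y` is then a subgradient of `h*` at `u`, which is the
optimality condition for `u = prox_{γ⁻¹h*}(γ⁻¹y)`. As `h*` is convex, the prox objective is
strongly convex and its minimiser is unique, so `q (γ⁻¹ • y) = u`. -/

theorem le_of_forall_pos_le_add_mul {a b c : ℝ} (h : ∀ t : ℝ, 0 < t → t ≤ 1 → a ≤ b + t * c) :
    a ≤ b := by
  have hlim : Tendsto (fun t : ℝ => b + t * c) (𝓝[>] 0) (𝓝 b) := by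
    have : Continuous (fun t : ℝ => b + t * c) := by fun_prop
    simpa using (this.tendsto 0).mono_left nhdsWithin_le_nhds
  refine ge_of_tendsto hlim ?_
  filter_upwards [Ioo_mem_nhdsGT (zero_lt_one' ℝ)] with t ht using h t ht.1 ht.2.le

section

variable {n : ℕ}

theorem IsProx.ne_top {γ : ℝ} {g : E n → EReal} {x p z : E n} (hp : IsProx γ g x p)
    (hz : g z ≠ ⊤) (hz' : g z ≠ ⊥) : g p ≠ ⊤ := by
  lift g z to ℝ using ⟨hz, hz'⟩ with c hc
  intro htop
  have hpz := hp z
  rw [htop, EReal.top_add_coe, top_le_iff, ← hc, ← EReal.coe_add] at hpz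
  exact EReal.coe_ne_top _ hpz

theorem IsProx.smul_sub_mem_subdiff {γ : ℝ} {h : E n → EReal} {x p : E n} (hγ : 0 < γ)
    (hconv : EConvexOn h) (hbot : ∀ z, h z ≠ ⊥) (hp : IsProx γ h x p) (hfin : h p ≠ ⊤) :
    γ⁻¹ • (x - p) ∈ Subdiff h p := by
  intro z
  obtain hz | hz := eq_or_ne (h z) ⊤
  · simp [hz]
  have hp_seg : ∀ t : ℝ, h p + ((1 / (2 * γ) * ‖p - x‖ ^ 2 : ℝ) : EReal) ≤
      h (t • z + (1 - t) • p) + ((1 / (2 * γ) * ‖(t • z + (1 - t) • p) - x‖ ^ 2 : ℝ) : EReal) :=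
    fun t => hp _
  have hconv_seg : ∀ t : ℝ, 0 ≤ t → t ≤ 1 →
      h (t • z + (1 - t) • p) ≤ (t : EReal) * h z + ((1 - t : ℝ) : EReal) * h p :=
    fun t ht ht1 => hconv z p t (1 - t) ht (by linarith) (by ring)
  lift h z to ℝ using ⟨hz, hbot z⟩ with c hc
  lift h p to ℝ using ⟨hfin, hbot p⟩ with a ha
  rw [← EReal.coe_add, EReal.coe_le_coe_iff]
  refine le_of_forall_pos_le_add_mul (c := ‖z - p‖ ^ 2 / (2 * γ)) fun t ht ht1 => ?_
  have hmin := (hp_seg t).trans (add_le_add (hconv_seg t ht.le ht1) le_rfl)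
  simp only [← EReal.coe_mul, ← EReal.coe_add, EReal.coe_le_coe_iff] at hmin
  rw [show t • z + (1 - t) • p - x = (p - x) + t • (z - p) by module, norm_add_sq_real,
    norm_smul, real_inner_smul_right, Real.norm_of_nonneg ht.le] at hmin
  rw [real_inner_smul_left, ← neg_sub p x, inner_neg_left]
  refine le_of_mul_le_mul_left ?_ ht
  field_simp at hmin ⊢
  nlinarith

theorem IsProx.of_mem_subdiff {σ : ℝ} {g : E n → EReal} {u v : E n} (hv : v ∈ Subdiff g u)
    (hσ : 0 < σ) : IsProx σ g (u + σ • v) u := by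
  intro z
  have hnorm : 1 / (2 * σ) * ‖u - (u + σ • v)‖ ^ 2
      ≤ ⟪v, z - u⟫_ℝ + 1 / (2 * σ) * ‖z - (u + σ • v)‖ ^ 2 := by
    rw [show u - (u + σ • v) = -(σ • v) by abel, show z - (u + σ • v) = (z - u) - σ • v by abel,
      norm_neg, norm_sub_sq_real, real_inner_smul_right, real_inner_comm]
    have : 0 ≤ ‖z - u‖ ^ 2 / (2 * σ) := by positivity
    field_simp
    nlinarith
  set d := 1 / (2 * σ) * ‖z - (u + σ • v)‖ ^ 2
  calc g u + ((1 / (2 * σ) * ‖u - (u + σ • v)‖ ^ 2 : ℝ) : EReal)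
      ≤ g u + ((⟪v, z - u⟫_ℝ + d : ℝ) : EReal) := by gcongr
    _ = g u + ((⟪v, z - u⟫_ℝ : ℝ) : EReal) + (d : EReal) := by rw [EReal.coe_add, add_assoc]
    _ ≤ g z + (d : EReal) := by gcongr; exact hv z

theorem IsProx.eq {σ : ℝ} {g : E n → EReal} {x p q : E n} (hσ : 0 < σ) (hconv : EConvexOn g)
    (hbot : ∀ z, g z ≠ ⊥) (hp : IsProx σ g x p) (hq : IsProx σ g x q) (hfin : g p ≠ ⊤) :
    p = q := by
  have hqfin := hq.ne_top hfin (hbot p)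
  have hmid := hconv p q 2⁻¹ 2⁻¹ (by norm_num) (by norm_num) (by norm_num)
  rw [← smul_add, show (2⁻¹ : ℝ) • (p + q) = midpoint ℝ p q by
    rw [midpoint_eq_smul_add, invOf_eq_inv]] at hmid
  set m := midpoint ℝ p q
  have hp_m := hp m
  have hq_m := hq m
  lift g p to ℝ using ⟨hfin, hbot p⟩ with a ha
  lift g q to ℝ using ⟨hqfin, hbot q⟩ with b hb
  rw [← EReal.coe_mul, ← EReal.coe_mul, ← EReal.coe_add] at hmid
  lift g m to ℝ using ⟨ne_top_of_le_ne_top (EReal.coe_ne_top _) hmid, hbot m⟩ with c hc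
  simp only [← EReal.coe_add, EReal.coe_le_coe_iff] at hmid hp_m hq_m
  have hA : 0 < 1 / (2 * σ) := by positivity
  have hapollonius :=
    EuclideanGeometry.dist_sq_add_dist_sq_eq_two_mul_dist_midpoint_sq_add_half_dist_sq x p q
  simp only [dist_comm x, dist_eq_norm] at hapollonius
  have hscaled : 1 / (2 * σ) * ‖p - q‖ ^ 2 ≤ 0 := by nlinarith
  have hD : ‖p - q‖ ^ 2 = 0 :=
    le_antisymm (nonpos_of_mul_nonpos_right hscaled hA) (sq_nonneg _)
  rwa [sq_eq_zero_iff, norm_eq_zero, sub_eq_zero] at hD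

theorem inner_sub_le_conjFn {h : E n → EReal} {x : E n} {c : ℝ} (hx : h x = c) (w : E n) :
    ((⟪x, w⟫_ℝ - c : ℝ) : EReal) ≤ conjFn h w :=
  le_iSup_of_le x (by rw [hx, EReal.coe_sub])

theorem conjFn_ne_bot {h : E n → EReal} {x : E n} (hx : h x ≠ ⊤) (w : E n) : conjFn h w ≠ ⊥ := by
  refine ne_bot_of_le_ne_bot ?_ (le_iSup (fun z => ((⟪z, w⟫_ℝ : ℝ) : EReal) - h z) x)
  generalize h x = v at hx ⊢
  induction v using EReal.rec with
  | bot => simp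
  | coe c => exact (EReal.coe_sub _ c) ▸ EReal.coe_ne_bot _
  | top => exact absurd rfl hx

theorem conjFn_eq_of_mem_subdiff {h : E n → EReal} {x u : E n} {a : ℝ} (hu : u ∈ Subdiff h x)
    (hx : h x = a) : conjFn h u = ((⟪x, u⟫_ℝ - a : ℝ) : EReal) := by
  refine le_antisymm (iSup_le fun z => ?_) (inner_sub_le_conjFn hx u)
  have hz := hu z
  rw [hx] at hz
  generalize h z = w at hz ⊢
  induction w using EReal.rec with
  | bot => exact absurd (le_bot_iff.1 hz) (by simp [← EReal.coe_add])
  | top => simp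
  | coe c =>
    rw [← EReal.coe_add, EReal.coe_le_coe_iff, inner_sub_right] at hz
    rw [← EReal.coe_sub, EReal.coe_le_coe_iff, real_inner_comm u, real_inner_comm u x]
    linarith

theorem mem_subdiff_conjFn {h : E n → EReal} {x u : E n} {a : ℝ} (hu : u ∈ Subdiff h x)
    (hx : h x = a) : x ∈ Subdiff (conjFn h) u := by
  intro w
  refine le_trans (le_of_eq ?_) (inner_sub_le_conjFn hx w)
  rw [conjFn_eq_of_mem_subdiff hu hx, ← EReal.coe_add, inner_sub_right]
  ring_nf

theorem econvexOn_conjFn {h : E n → EReal} (hbot : ∀ x, h x ≠ ⊥) : EConvexOn (conjFn h) := by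
  intro u v a b ha hb hab
  refine iSup_le fun x => ?_
  obtain hx | hx := eq_or_ne (h x) ⊤
  · simp [hx]
  lift h x to ℝ using ⟨hx, hbot x⟩ with c hc
  calc ((⟪x, a • u + b • v⟫_ℝ : ℝ) : EReal) - c
      = (a : EReal) * ((⟪x, u⟫_ℝ - c : ℝ) : EReal)
          + (b : EReal) * ((⟪x, v⟫_ℝ - c : ℝ) : EReal) := by
        rw [← EReal.coe_sub, ← EReal.coe_mul, ← EReal.coe_mul, ← EReal.coe_add, inner_add_right,
          real_inner_smul_right, real_inner_smul_right]
        congr 1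
        linear_combination c * hab
    _ ≤ (a : EReal) * conjFn h u + (b : EReal) * conjFn h v :=
        add_le_add
          (mul_le_mul_of_nonneg_left (inner_sub_le_conjFn hc.symm u) (EReal.coe_nonneg.2 ha))
          (mul_le_mul_of_nonneg_left (inner_sub_le_conjFn hc.symm v) (EReal.coe_nonneg.2 hb))

end

/-- Moreau identity: `y = prox_{γh}(y) + γ • prox_{γ⁻¹ h*}(γ⁻¹ • y)`. -/
theorem moreau_identity
    {n : ℕ} (γ : ℝ) (hγ : 0 < γ) (h : E n → EReal) (hh : ProperClosedConvex h)
    (p q : E n → E n)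
    (hp : ∀ x, IsProx γ h x (p x))
    (hq : ∀ x, IsProx γ⁻¹ (conjFn h) x (q x)) :
    ∀ y : E n, y = p y + γ • q (γ⁻¹ • y) := by
  obtain ⟨⟨⟨x₀, hx₀⟩, hbot⟩, -, hconv⟩ := hh
  intro y
  set u := γ⁻¹ • (y - p y)
  have hfin : h (p y) ≠ ⊤ := (hp y).ne_top hx₀ (hbot x₀)
  have hsub : u ∈ Subdiff h (p y) := (hp y).smul_sub_mem_subdiff hγ hconv hbot hfin
  lift h (p y) to ℝ using ⟨hfin, hbot _⟩ with a ha
  have hprox : IsProx γ⁻¹ (conjFn h) (γ⁻¹ • y) u := by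
    simpa [u, smul_sub] using
      IsProx.of_mem_subdiff (mem_subdiff_conjFn hsub ha.symm) (inv_pos.2 hγ)
  have hu : u = q (γ⁻¹ • y) :=
    hprox.eq (inv_pos.2 hγ) (econvexOn_conjFn hbot) (conjFn_ne_bot hx₀) (hq _)
      (by rw [conjFn_eq_of_mem_subdiff hsub ha.symm]; exact EReal.coe_ne_top _)
  rw [← hu, smul_smul, mul_inv_cancel₀ hγ.ne', one_smul, add_sub_cancel]
end
end

section
/- Under the standing assumptions (f proper closed μ_f-strongly convex, g proper closed convex, A linear, feasibility), for any γ > 0 and any y ∈ ℝ^m: ψ_γ(y) ≤ ψ(y) + (γ/2)‖Ax(y) - z_γ(y)‖², where ψ(y) = f*(-Aᵀy) + g*(y) is the dual objective and ψ_γ is the alternating minimization envelope. -/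
open scoped InnerProductSpace RealInnerProductSpace
open Filter Topology

noncomputable section

/-- Upper bound for the AME: `ψ_γ(y) ≤ ψ(y) + (γ/2)‖Ax(y) - z_γ(y)‖²`. -/
theorem AME_le_dualObj_add
    {n m : ℕ} (μ γ : ℝ) (hμ : 0 < μ) (hγ : 0 < γ)
    (f : E n → EReal) (g : E m → EReal) (A : E n →L[ℝ] E m)
    (hf : ProperClosedConvex f) (hsc : StronglyConvexWithMod μ f)
    (hg : ProperClosedConvex g)
    (hfeas : ∃ x, f x ≠ ⊤ ∧ g (A x) ≠ ⊤)
    (xmin : E m → E n)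
    (hx : ∀ y x, f (xmin y) + ((⟪y, A (xmin y)⟫_ℝ : ℝ) : EReal)
        ≤ f x + ((⟪y, A x⟫_ℝ : ℝ) : EReal))
    (zmin : E m → E m)
    (hz : ∀ y, IsProx γ⁻¹ g (γ⁻¹ • y + A (xmin y)) (zmin y)) :
    ∀ y : E m,
      AME f g A γ xmin zmin y ≤
        dualObj f g A y + ((γ / 2 * ‖A (xmin y) - zmin y‖ ^ 2 : ℝ) : EReal) := by
  intro y
  set x := xmin y with hxdef
  set z := zmin y with hzdef
  have hfxb : f x ≠ ⊥ := hf.1.2 x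
  have hgzb : g z ≠ ⊥ := hg.1.2 z
  by_cases hfx : f x = ⊤
  · have hA : AME f g A γ xmin zmin y = ⊥ := by
      simp only [AME, ← hxdef, ← hzdef, hfx]
      rw [EReal.top_add_of_ne_bot hgzb, EReal.top_add_of_ne_bot (EReal.coe_ne_bot _)]
      simp
    rw [hA]; exact bot_le
  by_cases hgz : g z = ⊤
  · have hA : AME f g A γ xmin zmin y = ⊥ := by
      simp only [AME, ← hxdef, ← hzdef, hgz]
      rw [EReal.add_top_of_ne_bot hfxb, EReal.top_add_of_ne_bot (EReal.coe_ne_bot _)]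
      simp
    rw [hA]; exact bot_le
  set a := (f x).toReal with hadef
  set b := (g z).toReal with hbdef
  have ha : f x = (a : EReal) := (EReal.coe_toReal hfx hfxb).symm
  have hb : g z = (b : EReal) := (EReal.coe_toReal hgz hgzb).symm
  set w := -(ContinuousLinearMap.adjoint A y) with hwdef
  have h1 : ((⟪x, w⟫_ℝ - a : ℝ) : EReal) ≤ conjFn f w := by
    have := le_iSup (fun u : E n => ((⟪u, w⟫_ℝ : ℝ) : EReal) - f u) x
    rw [ha] at this
    rw [EReal.coe_sub]
    exact this
  have h2 : ((⟪z, y⟫_ℝ - b : ℝ) : EReal) ≤ conjFn g y := by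
    have := le_iSup (fun v : E m => ((⟪v, y⟫_ℝ : ℝ) : EReal) - g v) z
    rw [hb] at this
    rw [EReal.coe_sub]
    exact this
  have hadd : (((⟪x, w⟫_ℝ - a) + (⟪z, y⟫_ℝ - b) : ℝ) : EReal) ≤ dualObj f g A y := by
    rw [EReal.coe_add]
    exact add_le_add h1 h2
  set c : ℝ := γ / 2 * ‖A x - z‖ ^ 2 with hcdef
  have hc : 0 ≤ c := by positivity
  have hAME : AME f g A γ xmin zmin y
      = ((-(a + b + (⟪y, A x - z⟫_ℝ + c)) : ℝ) : EReal) := by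
    simp only [AME, ← hxdef, ← hzdef, ha, hb, ← hcdef, ← EReal.coe_add, ← EReal.coe_neg]
  have hinner : ⟪x, w⟫_ℝ = -⟪y, A x⟫_ℝ := by
    rw [hwdef, inner_neg_right, ContinuousLinearMap.adjoint_inner_right, real_inner_comm]
  have hkey : -(a + b + (⟪y, A x - z⟫_ℝ + c)) ≤ ((⟪x, w⟫_ℝ - a) + (⟪z, y⟫_ℝ - b)) + c := by
    rw [hinner, inner_sub_right, real_inner_comm z y]
    nlinarith [hc]
  calc AME f g A γ xmin zmin y
      = ((-(a + b + (⟪y, A x - z⟫_ℝ + c)) : ℝ) : EReal) := hAME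
    _ ≤ ((((⟪x, w⟫_ℝ - a) + (⟪z, y⟫_ℝ - b)) + c : ℝ) : EReal) := EReal.coe_le_coe_iff.mpr hkey
    _ = (((⟪x, w⟫_ℝ - a) + (⟪z, y⟫_ℝ - b) : ℝ) : EReal) + (c : EReal) := by
        rw [EReal.coe_add]
    _ ≤ dualObj f g A y + (c : EReal) := add_le_add hadd le_rfl
end
end

section
/- Under the standing assumptions (f proper closed μ_f-strongly convex, g proper closed convex, A : ℝ^n → ℝ^m linear, feasibility), for any γ > 0 and y ∈ ℝ^m: ψ_γ(y) ≥ ψ(T_γ(y)) + (γ/2)(1 - γ‖A‖²/μ_f)‖Ax(y) - z_γ(y)‖², where T_γ(y) = y + γ(Ax(y) - z_γ(y)) and ψ(y) = f*(-Aᵀy) + g*(y). -/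
open scoped InnerProductSpace RealInnerProductSpace
open Filter Topology

noncomputable section

lemma ereal_cases (a : EReal) (h : a ≠ ⊥) : a = ⊤ ∨ ∃ r : ℝ, a = (r : EReal) := by
  induction a with
  | bot => exact absurd rfl h
  | coe r => exact Or.inr ⟨r, rfl⟩
  | top => exact Or.inl rfl

lemma ereal_real (a : EReal) (hb : a ≠ ⊥) (ht : a ≠ ⊤) : ∃ r : ℝ, a = (r : EReal) := by
  rcases ereal_cases a hb with h | h
  · exact absurd h ht
  · exact h

lemma min_quad_lower {n : ℕ} (α : ℝ) (hα : 0 < α) (Φ : E n → EReal) (q : E n → ℝ)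
    (hq : ∀ a b : E n, ∀ t : ℝ,
        q ((1 - t) • a + t • b) = (1 - t) * q a + t * q b - α * t * (1 - t) / 2 * ‖b - a‖ ^ 2)
    (hconv : EConvexOn (fun u => Φ u - ((q u : ℝ) : EReal)))
    (hbot : ∀ u, Φ u ≠ ⊥) (x : E n) (hxfin : Φ x ≠ ⊤)
    (hmin : ∀ w, Φ x ≤ Φ w) (w : E n) :
    Φ x + ((α / 2 * ‖w - x‖ ^ 2 : ℝ) : EReal) ≤ Φ w := by
  obtain ⟨rx, hrx⟩ := ereal_real (Φ x) (hbot x) hxfin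
  rcases ereal_cases (Φ w) (hbot w) with hw | ⟨rw, hrw⟩
  · rw [hw]; exact le_top
  rw [hrx, hrw]
  have key : ∀ t : ℝ, 0 < t → t < 1 → rx + α * (1 - t) / 2 * ‖w - x‖ ^ 2 ≤ rw := by
    intro t ht0 ht1
    set xt := (1 - t) • x + t • w with hxt
    have hcv := hconv x w (1 - t) t (by linarith) (le_of_lt ht0) (by ring)
    simp only at hcv
    rw [hrx, hrw] at hcv
    have hrhs : ((1 - t : ℝ) : EReal) * ((rx : EReal) - ((q x : ℝ) : EReal))
        + ((t : ℝ) : EReal) * ((rw : EReal) - ((q w : ℝ) : EReal))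
        = (((1 - t) * (rx - q x) + t * (rw - q w) : ℝ) : EReal) := by norm_cast
    rw [hrhs] at hcv
    obtain ⟨rt, hrt⟩ : ∃ r : ℝ, Φ xt = (r : EReal) := by
      refine ereal_real _ (hbot xt) fun htop => ?_
      rw [htop] at hcv
      rw [EReal.top_sub_coe] at hcv
      exact absurd (lt_of_le_of_lt hcv (EReal.coe_lt_top _)) (lt_irrefl _)
    rw [hrt] at hcv
    have hcv' : rt - q xt ≤ (1 - t) * (rx - q x) + t * (rw - q w) := by exact_mod_cast hcv
    have hmin' : rx ≤ rt := by
      have := hmin xt; rw [hrx, hrt] at this; exact_mod_cast this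
    have hqid := hq x w t
    have h1 : t * (rx + α * (1 - t) / 2 * ‖w - x‖ ^ 2) ≤ t * rw := by nlinarith
    exact le_of_mul_le_mul_left h1 ht0
  have hd : (0:ℝ) ≤ ‖w - x‖ ^ 2 := sq_nonneg _
  have main : rx + α / 2 * ‖w - x‖ ^ 2 ≤ rw := by
    refine le_of_forall_pos_le_add fun ε hε => ?_
    set D := α / 2 * ‖w - x‖ ^ 2 with hD
    have hD0 : 0 ≤ D := by positivity
    set t := min (1/2 : ℝ) (ε / (D + 1)) with ht
    have ht0 : 0 < t := lt_min (by norm_num) (div_pos hε (by linarith))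
    have ht1 : t < 1 := lt_of_le_of_lt (min_le_left _ _) (by norm_num)
    have hk := key t ht0 ht1
    have htD : t * D ≤ ε := by
      have h2 : t ≤ ε / (D + 1) := min_le_right _ _
      have h3 : t * D ≤ (ε / (D + 1)) * D := mul_le_mul_of_nonneg_right h2 hD0
      have h4 : (ε / (D + 1)) * D ≤ ε := by
        rw [div_mul_eq_mul_div, div_le_iff₀ (by linarith)]
        nlinarith
      linarith
    have h5 : α * (1 - t) / 2 * ‖w - x‖ ^ 2 = D - t * D := by rw [hD]; ring
    linarith
  exact_mod_cast main

lemma conjFn_le_of_subgrad {n : ℕ} (μ : ℝ) (hμ : 0 < μ) (f : E n → EReal)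
    (hbot : ∀ u, f u ≠ ⊥) (x u : E n) (fx : ℝ)
    (hsub : ∀ w, ((fx + ⟪u, w - x⟫_ℝ + μ / 2 * ‖w - x‖ ^ 2 : ℝ) : EReal) ≤ f w)
    (v : E n) :
    conjFn f v ≤ ((⟪x, v⟫_ℝ - fx + 1 / (2 * μ) * ‖v - u‖ ^ 2 : ℝ) : EReal) := by
  refine iSup_le fun w => ?_
  rcases ereal_cases (f w) (hbot w) with hw | ⟨rw, hrw⟩
  · rw [hw, EReal.sub_top]; exact bot_le
  rw [hrw]
  have hcoe : ((⟪w, v⟫_ℝ : ℝ) : EReal) - (rw : EReal) = ((⟪w, v⟫_ℝ - rw : ℝ) : EReal) := by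
    norm_cast
  rw [hcoe]
  have hs := hsub w; rw [hrw] at hs
  have hs' : fx + ⟪u, w - x⟫_ℝ + μ / 2 * ‖w - x‖ ^ 2 ≤ rw := by exact_mod_cast hs
  have hip : ⟪w - x, v - u⟫_ℝ ≤ μ / 2 * ‖w - x‖ ^ 2 + 1 / (2 * μ) * ‖v - u‖ ^ 2 := by
    have h1 := real_inner_le_norm (w - x) (v - u)
    have h3 : μ / 2 * ‖w - x‖ ^ 2 + 1 / (2 * μ) * ‖v - u‖ ^ 2 - ‖w - x‖ * ‖v - u‖
        = (μ * ‖w - x‖ - ‖v - u‖) ^ 2 / (2 * μ) := by field_simp; ring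
    have h4 : (0:ℝ) ≤ (μ * ‖w - x‖ - ‖v - u‖) ^ 2 / (2 * μ) :=
      div_nonneg (sq_nonneg _) (by linarith)
    linarith
  have hexp : ⟪w, v⟫_ℝ = ⟪x, v⟫_ℝ + ⟪w - x, v - u⟫_ℝ + ⟪u, w - x⟫_ℝ := by
    simp only [inner_sub_left, inner_sub_right, real_inner_comm u w, real_inner_comm u x]
    ring
  exact_mod_cast (by linarith : ⟪w, v⟫_ℝ - rw ≤ ⟪x, v⟫_ℝ - fx + 1 / (2 * μ) * ‖v - u‖ ^ 2)

lemma quad_id {k : ℕ} (c : ℝ) (w₀ a b : E k) (t : ℝ) :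
    c / 2 * ‖(1 - t) • a + t • b - w₀‖ ^ 2
      = (1 - t) * (c / 2 * ‖a - w₀‖ ^ 2) + t * (c / 2 * ‖b - w₀‖ ^ 2)
        - c * t * (1 - t) / 2 * ‖b - a‖ ^ 2 := by
  have h : ∀ z : E k, ‖z‖ ^ 2 = ⟪z, z⟫_ℝ := fun z => (real_inner_self_eq_norm_sq z).symm
  rw [h, h, h, h]
  simp only [inner_sub_left, inner_sub_right, inner_add_left, inner_add_right,
    real_inner_smul_left, real_inner_smul_right, real_inner_comm a b, real_inner_comm w₀ a,
    real_inner_comm w₀ b]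
  ring

lemma inner_quad_id {k : ℕ} (c : ℝ) (w₀ z p : E k) :
    ⟪c • (w₀ - z), p - z⟫_ℝ
      = c / 2 * ‖z - w₀‖ ^ 2 - c / 2 * ‖p - w₀‖ ^ 2 + c / 2 * ‖p - z‖ ^ 2 := by
  have h : ∀ u : E k, ‖u‖ ^ 2 = ⟪u, u⟫_ℝ := fun u => (real_inner_self_eq_norm_sq u).symm
  rw [h, h, h]
  simp only [inner_sub_left, inner_sub_right, real_inner_smul_left,
    real_inner_comm w₀ z, real_inner_comm w₀ p, real_inner_comm z p]
  ring

lemma conjFn_le_of_subgrad' {n : ℕ} (f : E n → EReal)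
    (hbot : ∀ u, f u ≠ ⊥) (x u : E n) (fx : ℝ)
    (hsub : ∀ w, ((fx + ⟪u, w - x⟫_ℝ : ℝ) : EReal) ≤ f w) :
    conjFn f u ≤ ((⟪x, u⟫_ℝ - fx : ℝ) : EReal) := by
  refine iSup_le fun w => ?_
  rcases ereal_cases (f w) (hbot w) with hw | ⟨rw, hrw⟩
  · rw [hw, EReal.sub_top]; exact bot_le
  rw [hrw]
  have hcoe : ((⟪w, u⟫_ℝ : ℝ) : EReal) - (rw : EReal) = ((⟪w, u⟫_ℝ - rw : ℝ) : EReal) := by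
    norm_cast
  rw [hcoe]
  have hs := hsub w; rw [hrw] at hs
  have hs' : fx + ⟪u, w - x⟫_ℝ ≤ rw := by exact_mod_cast hs
  have hexp : ⟪u, w - x⟫_ℝ = ⟪w, u⟫_ℝ - ⟪x, u⟫_ℝ := by
    rw [inner_sub_right, real_inner_comm u w, real_inner_comm u x]
  have : ⟪w, u⟫_ℝ - rw ≤ ⟪x, u⟫_ℝ - fx := by rw [hexp] at hs'; linarith
  exact_mod_cast this

set_option maxHeartbeats 2000000 in
/-- Lower bound for the AME:
`ψ_γ(y) ≥ ψ(T_γ(y)) + (γ/2)(1 - γ‖A‖²/μ_f)‖Ax(y) - z_γ(y)‖²`. -/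
theorem AME_ge_dualObj_T_add
    {n m : ℕ} (μ γ : ℝ) (hμ : 0 < μ) (hγ : 0 < γ)
    (f : E n → EReal) (g : E m → EReal) (A : E n →L[ℝ] E m)
    (hf : ProperClosedConvex f) (hsc : StronglyConvexWithMod μ f)
    (hg : ProperClosedConvex g)
    (hfeas : ∃ x, f x ≠ ⊤ ∧ g (A x) ≠ ⊤)
    (xmin : E m → E n)
    (hx : ∀ y x, f (xmin y) + ((⟪y, A (xmin y)⟫_ℝ : ℝ) : EReal)
        ≤ f x + ((⟪y, A x⟫_ℝ : ℝ) : EReal))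
    (zmin : E m → E m)
    (hz : ∀ y, IsProx γ⁻¹ g (γ⁻¹ • y + A (xmin y)) (zmin y)) :
    ∀ y : E m,
      dualObj f g A (y + γ • (A (xmin y) - zmin y))
        + ((γ / 2 * (1 - γ * ‖A‖ ^ 2 / μ) * ‖A (xmin y) - zmin y‖ ^ 2 : ℝ) : EReal)
      ≤ AME f g A γ xmin zmin y := by
  obtain ⟨⟨⟨x₀, hx₀⟩, hfbot⟩, _, hfconv⟩ := hf
  obtain ⟨⟨_, hgbot⟩, _, hgconv⟩ := hg
  obtain ⟨x₁, hx₁f, hx₁g⟩ := hfeas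
  intro y
  have hγ' : γ ≠ 0 := ne_of_gt hγ
  set x := xmin y with hxdef
  set z := zmin y with hzdef
  set T := y + γ • (A x - z) with hTdef
  set w₀ := γ⁻¹ • y + A x with hw₀def
  obtain ⟨f1, hf1⟩ := ereal_real (f x₁) (hfbot x₁) hx₁f
  obtain ⟨g1, hg1⟩ := ereal_real (g (A x₁)) (hgbot _) hx₁g
  -- f x is finite
  obtain ⟨fx, hfx⟩ : ∃ r : ℝ, f x = (r : EReal) := by
    refine ereal_real _ (hfbot x) fun htop => ?_
    have h := hx y x₁
    rw [htop, hf1] at h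
    have hlhs : (⊤ : EReal) + ((⟪y, A x⟫_ℝ : ℝ) : EReal) = ⊤ := by
      rw [EReal.top_add_of_ne_bot]; exact EReal.coe_ne_bot _
    rw [hlhs] at h
    have : ((f1 : EReal)) + ((⟪y, A x₁⟫_ℝ : ℝ) : EReal) = ((f1 + ⟪y, A x₁⟫_ℝ : ℝ) : EReal) := by
      norm_cast
    rw [this] at h
    exact absurd (top_le_iff.mp h) (EReal.coe_ne_top _)
  -- g z is finite
  have hco : (1 : ℝ) / (2 * γ⁻¹) = γ / 2 := by field_simp
  have hprox := hz y
  rw [IsProx] at hprox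
  simp only [hco] at hprox
  obtain ⟨gz, hgz⟩ : ∃ r : ℝ, g z = (r : EReal) := by
    refine ereal_real _ (hgbot z) fun htop => ?_
    have h := hprox (A x₁)
    rw [htop, hg1] at h
    have hlhs : (⊤ : EReal) + ((γ / 2 * ‖z - w₀‖ ^ 2 : ℝ) : EReal) = ⊤ := by
      rw [EReal.top_add_of_ne_bot]; exact EReal.coe_ne_bot _
    rw [hlhs] at h
    have : ((g1 : EReal)) + ((γ / 2 * ‖A x₁ - w₀‖ ^ 2 : ℝ) : EReal)
        = ((g1 + γ / 2 * ‖A x₁ - w₀‖ ^ 2 : ℝ) : EReal) := by norm_cast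
    rw [this] at h
    exact absurd (top_le_iff.mp h) (EReal.coe_ne_top _)
  ---- the f side
  set Φf : E n → EReal := fun w => f w + ((⟪y, A w⟫_ℝ : ℝ) : EReal) with hΦf
  set qf : E n → ℝ := fun w => μ / 2 * ‖w‖ ^ 2 + ⟪y, A w⟫_ℝ with hqf
  have hconvf : EConvexOn (fun u => Φf u - ((qf u : ℝ) : EReal)) := by
    have heq : (fun u => Φf u - ((qf u : ℝ) : EReal))
        = fun u => f u - ((μ / 2 * ‖u‖ ^ 2 : ℝ) : EReal) := by
      funext u
      simp only [hΦf, hqf]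
      rcases ereal_cases (f u) (hfbot u) with h | ⟨r, hr⟩
      · rw [h]
        rw [EReal.top_add_of_ne_bot (EReal.coe_ne_bot _), EReal.top_sub_coe, EReal.top_sub_coe]
      · rw [hr]; norm_cast; ring
    rw [heq]; exact hsc
  have hqidf : ∀ a b : E n, ∀ t : ℝ,
      qf ((1 - t) • a + t • b) = (1 - t) * qf a + t * qf b - μ * t * (1 - t) / 2 * ‖b - a‖ ^ 2 := by
    intro a b t
    have h0 := quad_id μ 0 a b t
    simp only [sub_zero] at h0
    have hlin : ⟪y, A ((1 - t) • a + t • b)⟫_ℝ = (1 - t) * ⟪y, A a⟫_ℝ + t * ⟪y, A b⟫_ℝ := by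
      rw [map_add, map_smul, map_smul, inner_add_right, real_inner_smul_right,
        real_inner_smul_right]
    simp only [hqf]
    rw [hlin, h0]; ring
  have hbotf : ∀ u, Φf u ≠ ⊥ := by
    intro u
    simp only [hΦf]
    rcases ereal_cases (f u) (hfbot u) with h | ⟨r, hr⟩
    · rw [h, EReal.top_add_of_ne_bot (EReal.coe_ne_bot _)]; exact top_ne_bot
    · rw [hr]
      exact_mod_cast EReal.coe_ne_bot _
  have hfinf : Φf x ≠ ⊤ := by
    simp only [hΦf]; rw [hfx]
    exact_mod_cast EReal.coe_ne_top _
  have hminf : ∀ w, Φf x ≤ Φf w := fun w => hx y w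
  have hlowf := min_quad_lower μ hμ Φf qf hqidf hconvf hbotf x hfinf hminf
  have hsubf : ∀ w, ((fx + ⟪-(ContinuousLinearMap.adjoint A y), w - x⟫_ℝ
      + μ / 2 * ‖w - x‖ ^ 2 : ℝ) : EReal) ≤ f w := by
    intro w
    rcases ereal_cases (f w) (hfbot w) with h | ⟨rw', hrw'⟩
    · rw [h]; exact le_top
    have h1 := hlowf w
    simp only [hΦf] at h1
    rw [hfx, hrw'] at h1
    have h2 : fx + ⟪y, A x⟫_ℝ + μ / 2 * ‖w - x‖ ^ 2 ≤ rw' + ⟪y, A w⟫_ℝ := by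
      exact_mod_cast h1
    rw [hrw']
    have hadj : ⟪-(ContinuousLinearMap.adjoint A y), w - x⟫_ℝ = ⟪y, A x⟫_ℝ - ⟪y, A w⟫_ℝ := by
      rw [inner_neg_left, ContinuousLinearMap.adjoint_inner_left, map_sub, inner_sub_right]
      ring
    have h3 : fx + ⟪-(ContinuousLinearMap.adjoint A y), w - x⟫_ℝ + μ / 2 * ‖w - x‖ ^ 2 ≤ rw' := by
      rw [hadj]; linarith
    exact_mod_cast h3
  have hBf := conjFn_le_of_subgrad μ hμ f hfbot x (-(ContinuousLinearMap.adjoint A y)) fx hsubf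
    (-(ContinuousLinearMap.adjoint A T))
  ---- the g side
  set Φg : E m → EReal := fun p => g p + ((γ / 2 * ‖p - w₀‖ ^ 2 : ℝ) : EReal) with hΦg
  set qg : E m → ℝ := fun p => γ / 2 * ‖p - w₀‖ ^ 2 with hqg
  have hconvg : EConvexOn (fun u => Φg u - ((qg u : ℝ) : EReal)) := by
    have heq : (fun u => Φg u - ((qg u : ℝ) : EReal)) = g := by
      funext u
      simp only [hΦg, hqg]
      rcases ereal_cases (g u) (hgbot u) with h | ⟨r, hr⟩
      · rw [h, EReal.top_add_of_ne_bot (EReal.coe_ne_bot _), EReal.top_sub_coe]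
      · rw [hr]; norm_cast; ring
    rw [heq]; exact hgconv
  have hqidg : ∀ a b : E m, ∀ t : ℝ,
      qg ((1 - t) • a + t • b) = (1 - t) * qg a + t * qg b - γ * t * (1 - t) / 2 * ‖b - a‖ ^ 2 :=
    fun a b t => quad_id γ w₀ a b t
  have hbotg : ∀ u, Φg u ≠ ⊥ := by
    intro u
    simp only [hΦg]
    rcases ereal_cases (g u) (hgbot u) with h | ⟨r, hr⟩
    · rw [h, EReal.top_add_of_ne_bot (EReal.coe_ne_bot _)]; exact top_ne_bot
    · rw [hr]; exact_mod_cast EReal.coe_ne_bot _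
  have hfing : Φg z ≠ ⊤ := by
    simp only [hΦg]; rw [hgz]
    exact_mod_cast EReal.coe_ne_top _
  have hming : ∀ p, Φg z ≤ Φg p := fun p => hprox p
  have hlowg := min_quad_lower γ hγ Φg qg hqidg hconvg hbotg z hfing hming
  have hTsm : T = γ • (w₀ - z) := by
    simp only [hTdef, hw₀def, smul_sub, smul_add, smul_smul, mul_inv_cancel₀ hγ', one_smul]
    abel
  have hsubg : ∀ p, ((gz + ⟪T, p - z⟫_ℝ : ℝ) : EReal) ≤ g p := by
    intro p
    rcases ereal_cases (g p) (hgbot p) with h | ⟨rp, hrp⟩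
    · rw [h]; exact le_top
    have h1 := hlowg p
    simp only [hΦg] at h1
    rw [hgz, hrp] at h1
    have h2 : gz + γ / 2 * ‖z - w₀‖ ^ 2 + γ / 2 * ‖p - z‖ ^ 2
        ≤ rp + γ / 2 * ‖p - w₀‖ ^ 2 := by exact_mod_cast h1
    have hiq := inner_quad_id γ w₀ z p
    rw [hrp]
    have h3 : gz + ⟪T, p - z⟫_ℝ ≤ rp := by
      rw [hTsm, hiq]; linarith
    exact_mod_cast h3
  have hBg := conjFn_le_of_subgrad' g hgbot z T gz hsubg
  ---- assembly
  rw [AME, dualObj]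
  rw [hfx, hgz]
  set d := A x - z with hddef
  have hAME : -((fx : EReal) + (gz : EReal)
      + ((⟪y, d⟫_ℝ + γ / 2 * ‖d‖ ^ 2 : ℝ) : EReal))
      = ((-(fx + gz + (⟪y, d⟫_ℝ + γ / 2 * ‖d‖ ^ 2)) : ℝ) : EReal) := by norm_cast
  rw [hAME]
  have hsum : conjFn f (-(ContinuousLinearMap.adjoint A T)) + conjFn g T
      + ((γ / 2 * (1 - γ * ‖A‖ ^ 2 / μ) * ‖d‖ ^ 2 : ℝ) : EReal)
      ≤ (((⟪x, -(ContinuousLinearMap.adjoint A T)⟫_ℝ - fx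
          + 1 / (2 * μ) * ‖-(ContinuousLinearMap.adjoint A T) - -(ContinuousLinearMap.adjoint A y)‖ ^ 2)
          + (⟪z, T⟫_ℝ - gz)
          + γ / 2 * (1 - γ * ‖A‖ ^ 2 / μ) * ‖d‖ ^ 2 : ℝ) : EReal) := by
    push_cast
    exact add_le_add (add_le_add hBf hBg) le_rfl
  refine le_trans hsum ?_
  rw [EReal.coe_le_coe_iff]
  -- now pure real arithmetic
  have hWnorm : ‖-(ContinuousLinearMap.adjoint A T) - -(ContinuousLinearMap.adjoint A y)‖
      ≤ γ * ‖A‖ * ‖d‖ := by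
    have he : -(ContinuousLinearMap.adjoint A T) - -(ContinuousLinearMap.adjoint A y)
        = ContinuousLinearMap.adjoint A (y - T) := by
      rw [map_sub]; abel
    have he2 : y - T = -(γ • d) := by rw [hTdef]; abel
    rw [he, he2, map_neg, norm_neg, map_smul, norm_smul]
    have hop : ‖ContinuousLinearMap.adjoint A d‖ ≤ ‖A‖ * ‖d‖ := by
      have h1 := (ContinuousLinearMap.adjoint A).le_opNorm d
      have h2 : ‖(ContinuousLinearMap.adjoint A : E m →L[ℝ] E n)‖ = ‖A‖ :=
        (ContinuousLinearMap.adjoint : (E n →L[ℝ] E m) ≃ₗᵢ⋆[ℝ] (E m →L[ℝ] E n)).norm_map A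
      rw [h2] at h1; exact h1
    calc ‖γ‖ * ‖ContinuousLinearMap.adjoint A d‖
        ≤ ‖γ‖ * (‖A‖ * ‖d‖) := by
          apply mul_le_mul_of_nonneg_left hop (norm_nonneg _)
      _ = γ * ‖A‖ * ‖d‖ := by rw [Real.norm_eq_abs, abs_of_pos hγ]; ring
  have hWsq : ‖-(ContinuousLinearMap.adjoint A T) - -(ContinuousLinearMap.adjoint A y)‖ ^ 2
      ≤ γ ^ 2 * ‖A‖ ^ 2 * ‖d‖ ^ 2 := by
    have := pow_le_pow_left₀ (norm_nonneg _) hWnorm 2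
    calc _ ≤ (γ * ‖A‖ * ‖d‖) ^ 2 := this
      _ = γ ^ 2 * ‖A‖ ^ 2 * ‖d‖ ^ 2 := by ring
  have hip1 : ⟪x, -(ContinuousLinearMap.adjoint A T)⟫_ℝ = -⟪A x, T⟫_ℝ := by
    rw [inner_neg_right, ContinuousLinearMap.adjoint_inner_right]
  have hip2 : ⟪A x, T⟫_ℝ - ⟪z, T⟫_ℝ = ⟪y, d⟫_ℝ + γ * ‖d‖ ^ 2 := by
    rw [← inner_sub_left, ← hddef, hTdef, inner_add_right, real_inner_smul_right,
      real_inner_self_eq_norm_sq, real_inner_comm]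
  have hkey : 1 / (2 * μ) * (γ ^ 2 * ‖A‖ ^ 2 * ‖d‖ ^ 2)
      + γ / 2 * (1 - γ * ‖A‖ ^ 2 / μ) * ‖d‖ ^ 2 = γ / 2 * ‖d‖ ^ 2 := by
    field_simp; ring
  have hmono : 1 / (2 * μ)
        * ‖-(ContinuousLinearMap.adjoint A T) - -(ContinuousLinearMap.adjoint A y)‖ ^ 2
      ≤ 1 / (2 * μ) * (γ ^ 2 * ‖A‖ ^ 2 * ‖d‖ ^ 2) :=
    mul_le_mul_of_nonneg_left hWsq (by positivity)
  rw [hip1]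
  linarith [hip2]
end
end

section
/- Under the standing assumptions, if 0 < γ < μ_f/‖A‖², then inf ψ_γ = inf ψ and argmin ψ_γ = argmin ψ, where ψ is the dual objective and ψ_γ the alternating minimization envelope. -/
open scoped InnerProductSpace RealInnerProductSpace
open Filter Topology

noncomputable section

lemma limit_aux {S c : ℝ} (hS : 0 ≤ S)
    (h : ∀ t : ℝ, 0 < t → t < 1 → (1 - t) * S ≤ c) : S ≤ c := by
  by_contra h'
  push_neg at h'
  have h1 := h (1/2) (by norm_num) (by norm_num)
  have hS0 : 0 < S := by nlinarith
  have hSc : 0 < S - c := by linarith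
  have ht0 : 0 < (S - c) / (2 * S) := by positivity
  have ht1 : (S - c) / (2 * S) < 1 := by
    rw [div_lt_one (by linarith)]; nlinarith
  have H := h _ ht0 ht1
  have hEq : (1 - (S - c) / (2 * S)) * S = (S + c) / 2 := by
    field_simp; ring
  rw [hEq] at H; linarith

lemma limit_aux2 {X K : ℝ} (hK : 0 ≤ K)
    (h : ∀ t : ℝ, 0 < t → t < 1 → X ≤ t * K) : X ≤ 0 := by
  have := limit_aux (S := K) (c := K - X) hK (fun t ht1 ht2 => by
    have := h t ht1 ht2; nlinarith)
  linarith

lemma ereal_real_s7 {X : EReal} (hT : X ≠ ⊤) (hB : X ≠ ⊥) : ∃ r : ℝ, X = (r : EReal) := by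
  induction X with
  | bot => simp at hB
  | coe r => exact ⟨r, rfl⟩
  | top => simp at hT

lemma f_lower {n m : ℕ} {μ : ℝ} (hμ : 0 < μ) {f : E n → EReal}
    (hfb : ∀ x, f x ≠ ⊥)
    (hsc : StronglyConvexWithMod μ f)
    (A : E n →L[ℝ] E m) (y : E m) (xs : E n) (a : ℝ) (ha : f xs = (a : EReal))
    (hmin : ∀ x, f xs + ((⟪y, A xs⟫_ℝ : ℝ) : EReal) ≤ f x + ((⟪y, A x⟫_ℝ : ℝ) : EReal))
    (x : E n) :
    ((a + μ / 2 * ‖x - xs‖ ^ 2 - ⟪y, A (x - xs)⟫_ℝ : ℝ) : EReal) ≤ f x := by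
  by_cases hT : f x = ⊤
  · rw [hT]; exact le_top
  obtain ⟨b, hb⟩ := ereal_real_s7 hT (hfb x)
  rw [hb, EReal.coe_le_coe_iff]
  set s := x - xs with hs
  have hkey : ∀ t : ℝ, 0 < t → t < 1 → (1 - t) * (μ / 2 * ‖s‖ ^ 2) ≤ b - a + ⟪y, A s⟫_ℝ := by
    intro t ht0 ht1
    set xt := xs + t • s with hxt
    have hconv := hsc xs x (1 - t) t (by linarith) (le_of_lt ht0) (by ring)
    simp only at hconv
    have hcomb : (1 - t) • xs + t • x = xt := by rw [hxt, hs]; module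
    rw [hcomb, ha, hb] at hconv
    rw [show ((a : EReal) - ((μ / 2 * ‖xs‖ ^ 2 : ℝ) : EReal)) = ((a - μ / 2 * ‖xs‖ ^ 2 : ℝ) : EReal) from (EReal.coe_sub _ _).symm,
        show ((b : EReal) - ((μ / 2 * ‖x‖ ^ 2 : ℝ) : EReal)) = ((b - μ / 2 * ‖x‖ ^ 2 : ℝ) : EReal) from (EReal.coe_sub _ _).symm,
        ← EReal.coe_mul, ← EReal.coe_mul, ← EReal.coe_add] at hconv
    -- hconv : f xt - coe(μ/2‖xt‖²) ≤ coe R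
    obtain ⟨e, he⟩ : ∃ r : ℝ, f xt = (r : EReal) := by
      refine ereal_real_s7 ?_ (hfb xt)
      intro h
      rw [h, EReal.top_sub_coe, top_le_iff] at hconv
      exact EReal.coe_ne_top _ hconv
    rw [he, ← EReal.coe_sub, EReal.coe_le_coe_iff] at hconv
    have hmm := hmin xt
    rw [ha, he, ← EReal.coe_add, ← EReal.coe_add, EReal.coe_le_coe_iff] at hmm
    -- now real arithmetic
    have hAxt : ⟪y, A xt⟫_ℝ = ⟪y, A xs⟫_ℝ + t * ⟪y, A s⟫_ℝ := by
      rw [hxt, map_add, map_smul, inner_add_right, inner_smul_right]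
    have hnxt : ‖xt‖ ^ 2 = ‖xs‖ ^ 2 + 2 * t * ⟪xs, s⟫_ℝ + t ^ 2 * ‖s‖ ^ 2 := by
      rw [hxt, norm_add_sq_real, inner_smul_right, norm_smul]
      simp [mul_pow]
      ring
    have hnx : ‖x‖ ^ 2 = ‖xs‖ ^ 2 + 2 * ⟪xs, s⟫_ℝ + ‖s‖ ^ 2 := by
      have hxx : x = xs + s := by rw [hs]; abel
      rw [hxx, norm_add_sq_real]
    rw [hAxt] at hmm
    rw [hnxt, hnx] at hconv
    have hmul : t * ((1 - t) * (μ / 2 * ‖s‖ ^ 2)) ≤ t * (b - a + ⟪y, A s⟫_ℝ) := by nlinarith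
    exact le_of_mul_le_mul_left hmul ht0
  have := limit_aux (by positivity) hkey
  linarith

lemma g_subgrad {m : ℕ} {γ : ℝ} (hγ : 0 < γ) {g : E m → EReal}
    (hgb : ∀ z, g z ≠ ⊥) (hgc : EConvexOn g)
    (u zs : E m) (b : ℝ) (hb : g zs = (b : EReal))
    (hprox : ∀ w, g zs + ((1 / (2 * γ⁻¹) * ‖zs - u‖ ^ 2 : ℝ) : EReal)
      ≤ g w + ((1 / (2 * γ⁻¹) * ‖w - u‖ ^ 2 : ℝ) : EReal))
    (w : E m) :
    ((b + γ * ⟪u - zs, w - zs⟫_ℝ : ℝ) : EReal) ≤ g w := by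
  by_cases hT : g w = ⊤
  · rw [hT]; exact le_top
  obtain ⟨c, hc⟩ := ereal_real_s7 hT (hgb w)
  rw [hc, EReal.coe_le_coe_iff]
  have hγ2 : 1 / (2 * γ⁻¹) = γ / 2 := by field_simp
  have hkey : ∀ t : ℝ, 0 < t → t < 1 →
      b + γ * ⟪u - zs, w - zs⟫_ℝ - c ≤ t * (γ / 2 * ‖w - zs‖ ^ 2) := by
    intro t ht0 ht1
    set wt := zs + t • (w - zs) with hwt
    have hconv := hgc zs w (1 - t) t (by linarith) (le_of_lt ht0) (by ring)
    have hcomb : (1 - t) • zs + t • w = wt := by rw [hwt]; module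
    rw [hcomb, hb, hc, ← EReal.coe_mul, ← EReal.coe_mul, ← EReal.coe_add] at hconv
    obtain ⟨e, he⟩ : ∃ r : ℝ, g wt = (r : EReal) := by
      refine ereal_real_s7 ?_ (hgb wt)
      intro h
      rw [h, top_le_iff] at hconv
      exact EReal.coe_ne_top _ hconv
    rw [he, EReal.coe_le_coe_iff] at hconv
    have hpp := hprox wt
    rw [hb, he, hγ2, ← EReal.coe_add, ← EReal.coe_add, EReal.coe_le_coe_iff] at hpp
    have hnwt : ‖wt - u‖ ^ 2 = ‖zs - u‖ ^ 2 + 2 * t * ⟪zs - u, w - zs⟫_ℝ + t ^ 2 * ‖w - zs‖ ^ 2 := by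
      have h1 : wt - u = (zs - u) + t • (w - zs) := by rw [hwt]; abel
      rw [h1, norm_add_sq_real, inner_smul_right, norm_smul]
      simp [mul_pow]
      ring
    rw [hnwt] at hpp
    have hinner : ⟪u - zs, w - zs⟫_ℝ = -⟪zs - u, w - zs⟫_ℝ := by
      rw [← inner_neg_left]; congr 1; abel
    rw [hinner]
    have hmul : t * (b + γ * -⟪zs - u, w - zs⟫_ℝ - c) ≤ t * (t * (γ / 2 * ‖w - zs‖ ^ 2)) := by
      nlinarith
    exact le_of_mul_le_mul_left hmul ht0
  have := limit_aux2 (by positivity) hkey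
  linarith

lemma conj_ge {m : ℕ} {g : E m → EReal} (zs : E m) (v : E m) (b : ℝ)
    (hb : g zs = (b : EReal)) : ((⟪v, zs⟫_ℝ - b : ℝ) : EReal) ≤ conjFn g v := by
  have h := le_iSup (fun w => ((⟪w, v⟫_ℝ : ℝ) : EReal) - g w) zs
  rw [hb, ← EReal.coe_sub, real_inner_comm] at h
  exact h

lemma conj_g_eq {m : ℕ} {g : E m → EReal} (hgb : ∀ z, g z ≠ ⊥) (zs v : E m) (b : ℝ)
    (hb : g zs = (b : EReal))
    (hsub : ∀ w, ((b + ⟪v, w - zs⟫_ℝ : ℝ) : EReal) ≤ g w) :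
    conjFn g v = ((⟪v, zs⟫_ℝ - b : ℝ) : EReal) := by
  refine le_antisymm ?_ (conj_ge zs v b hb)
  apply iSup_le
  intro w
  by_cases hT : g w = ⊤
  · rw [hT, EReal.sub_top]; exact bot_le
  obtain ⟨c, hc⟩ := ereal_real_s7 hT (hgb w)
  rw [hc, ← EReal.coe_sub, EReal.coe_le_coe_iff]
  have hs := hsub w
  rw [hc, EReal.coe_le_coe_iff] at hs
  rw [inner_sub_right] at hs
  rw [real_inner_comm]
  linarith

lemma conj_f_eq {n m : ℕ} {f : E n → EReal} (hfb : ∀ x, f x ≠ ⊥)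
    (A : E n →L[ℝ] E m) (y : E m) (xs : E n) (a : ℝ) (ha : f xs = (a : EReal))
    (hmin : ∀ x, f xs + ((⟪y, A xs⟫_ℝ : ℝ) : EReal) ≤ f x + ((⟪y, A x⟫_ℝ : ℝ) : EReal)) :
    conjFn f (-(ContinuousLinearMap.adjoint A y)) = ((-(a + ⟪y, A xs⟫_ℝ) : ℝ) : EReal) := by
  have hip : ∀ x : E n, ⟪x, -(ContinuousLinearMap.adjoint A y)⟫_ℝ = -⟪y, A x⟫_ℝ := by
    intro x
    rw [inner_neg_right, real_inner_comm, ContinuousLinearMap.adjoint_inner_left]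
  refine le_antisymm ?_ ?_
  · apply iSup_le
    intro x
    by_cases hT : f x = ⊤
    · rw [hT, EReal.sub_top]; exact bot_le
    obtain ⟨c, hc⟩ := ereal_real_s7 hT (hfb x)
    rw [hc, ← EReal.coe_sub, EReal.coe_le_coe_iff, hip]
    have hm := hmin x
    rw [ha, hc, ← EReal.coe_add, ← EReal.coe_add, EReal.coe_le_coe_iff] at hm
    linarith
  · have h := le_iSup (fun x => ((⟪x, -(ContinuousLinearMap.adjoint A y)⟫_ℝ : ℝ) : EReal) - f x) xs
    rw [ha, ← EReal.coe_sub, hip] at h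
    refine le_trans (le_of_eq ?_) h
    norm_cast
    ring

lemma conj_f_le {n m : ℕ} {μ : ℝ} (hμ : 0 < μ) {f : E n → EReal} (hfb : ∀ x, f x ≠ ⊥)
    (A : E n →L[ℝ] E m) (y y' : E m) (xs : E n) (a : ℝ)
    (hlow : ∀ x, ((a + μ / 2 * ‖x - xs‖ ^ 2 - ⟪y, A (x - xs)⟫_ℝ : ℝ) : EReal) ≤ f x) :
    conjFn f (-(ContinuousLinearMap.adjoint A y'))
      ≤ ((-(a + ⟪y', A xs⟫_ℝ) + ‖ContinuousLinearMap.adjoint A (y' - y)‖ ^ 2 / (2 * μ) : ℝ) : EReal) := by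
  apply iSup_le
  intro x
  by_cases hT : f x = ⊤
  · rw [hT, EReal.sub_top]; exact bot_le
  obtain ⟨c, hc⟩ := ereal_real_s7 hT (hfb x)
  rw [hc, ← EReal.coe_sub, EReal.coe_le_coe_iff]
  have hl := hlow x
  rw [hc, EReal.coe_le_coe_iff] at hl
  set s := x - xs with hs
  set v := ContinuousLinearMap.adjoint A (y' - y) with hv
  have hip : ⟪x, -(ContinuousLinearMap.adjoint A y')⟫_ℝ = -⟪y', A x⟫_ℝ := by
    rw [inner_neg_right, real_inner_comm, ContinuousLinearMap.adjoint_inner_left]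
  have hAx : A x = A xs + A s := by rw [← map_add]; congr 1; rw [hs]; abel
  have hsplit : ⟪y', A x⟫_ℝ = ⟪y', A xs⟫_ℝ + ⟪y', A s⟫_ℝ := by
    rw [hAx, inner_add_right]
  have hvs : ⟪y', A s⟫_ℝ - ⟪y, A s⟫_ℝ = ⟪v, s⟫_ℝ := by
    rw [hv, ContinuousLinearMap.adjoint_inner_left, inner_sub_left]
  have hcs : -⟪v, s⟫_ℝ ≤ ‖v‖ * ‖s‖ := by
    have := abs_real_inner_le_norm v s
    cases abs_le.mp this; linarith
  have hq : ‖v‖ * ‖s‖ ≤ ‖v‖ ^ 2 / (2 * μ) + μ / 2 * ‖s‖ ^ 2 := by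
    rw [div_add' _ _ _ (by positivity), le_div_iff₀ (by positivity)]
    nlinarith [sq_nonneg (‖v‖ - μ * ‖s‖)]
  rw [hip, hsplit]
  have h1 : -⟪v, s⟫_ℝ - μ / 2 * ‖s‖ ^ 2 ≤ ‖v‖ ^ 2 / (2 * μ) := by linarith
  linarith [hl, hvs]

lemma dual_lb {n m : ℕ} {f : E n → EReal} {g : E m → EReal} (hfb : ∀ x, f x ≠ ⊥)
    (A : E n →L[ℝ] E m) (y : E m) (xs : E n) (zs : E m) (a b : ℝ)
    (ha : f xs = (a : EReal)) (hb : g zs = (b : EReal))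
    (hmin : ∀ x, f xs + ((⟪y, A xs⟫_ℝ : ℝ) : EReal) ≤ f x + ((⟪y, A x⟫_ℝ : ℝ) : EReal)) :
    ((-(a + b + ⟪y, A xs - zs⟫_ℝ) : ℝ) : EReal) ≤ dualObj f g A y := by
  have h1 := conj_f_eq hfb A y xs a ha hmin
  have h2 := conj_ge zs y b hb
  have h3 : ((-(a + ⟪y, A xs⟫_ℝ) : ℝ) : EReal) + ((⟪y, zs⟫_ℝ - b : ℝ) : EReal)
      ≤ dualObj f g A y := by
    rw [dualObj]
    exact add_le_add (le_of_eq h1.symm) h2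
  refine le_trans (le_of_eq ?_) h3
  rw [← EReal.coe_add]
  norm_cast
  rw [inner_sub_right]
  ring

lemma dual_ub {n m : ℕ} {μ γ : ℝ} (hμ : 0 < μ) (hγ : 0 < γ)
    {f : E n → EReal} {g : E m → EReal} (hfb : ∀ x, f x ≠ ⊥) (hgb : ∀ z, g z ≠ ⊥)
    (hgc : EConvexOn g)
    (A : E n →L[ℝ] E m) (y : E m) (xs : E n) (zs : E m) (a b : ℝ)
    (ha : f xs = (a : EReal)) (hb : g zs = (b : EReal))
    (hlow : ∀ x, ((a + μ / 2 * ‖x - xs‖ ^ 2 - ⟪y, A (x - xs)⟫_ℝ : ℝ) : EReal) ≤ f x)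
    (hprox : ∀ w, g zs + ((1 / (2 * γ⁻¹) * ‖zs - (γ⁻¹ • y + A xs)‖ ^ 2 : ℝ) : EReal)
      ≤ g w + ((1 / (2 * γ⁻¹) * ‖w - (γ⁻¹ • y + A xs)‖ ^ 2 : ℝ) : EReal)) :
    dualObj f g A (y + γ • (A xs - zs)) ≤
      ((-(a + b + (⟪y, A xs - zs⟫_ℝ + γ / 2 * ‖A xs - zs‖ ^ 2))
        - (γ / 2 - γ ^ 2 * ‖A‖ ^ 2 / (2 * μ)) * ‖A xs - zs‖ ^ 2 : ℝ) : EReal) := by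
  set d := A xs - zs with hd
  set y' := y + γ • d with hy'
  have hTu : γ • ((γ⁻¹ • y + A xs) - zs) = y' := by
    rw [hy', show (γ⁻¹ • y + A xs) - zs = γ⁻¹ • y + d from by rw [hd]; abel, smul_add,
      smul_smul, mul_inv_cancel₀ (ne_of_gt hγ), one_smul]
  have hsub : ∀ w, ((b + ⟪y', w - zs⟫_ℝ : ℝ) : EReal) ≤ g w := by
    intro w
    have h := g_subgrad hγ hgb hgc (γ⁻¹ • y + A xs) zs b hb hprox w
    have : ⟪y', w - zs⟫_ℝ = γ * ⟪(γ⁻¹ • y + A xs) - zs, w - zs⟫_ℝ := by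
      rw [← hTu, real_inner_smul_left]
    rw [this]
    exact h
  have hg1 := conj_g_eq hgb zs y' b hb hsub
  have hf1 := conj_f_le hμ hfb A y y' xs a hlow
  have hnorm : ‖ContinuousLinearMap.adjoint A (y' - y)‖ ≤ γ * (‖A‖ * ‖d‖) := by
    have h1 : y' - y = γ • d := by rw [hy']; abel
    rw [h1]
    calc ‖ContinuousLinearMap.adjoint A (γ • d)‖
        ≤ ‖ContinuousLinearMap.adjoint A‖ * ‖γ • d‖ := ContinuousLinearMap.le_opNorm _ _
      _ = ‖A‖ * (γ * ‖d‖) := by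
          rw [LinearIsometryEquiv.norm_map ContinuousLinearMap.adjoint A, norm_smul,
            Real.norm_eq_abs, abs_of_pos hγ]
      _ = γ * (‖A‖ * ‖d‖) := by ring
  have hsum : dualObj f g A y'
      ≤ ((-(a + ⟪y', A xs⟫_ℝ) + ‖ContinuousLinearMap.adjoint A (y' - y)‖ ^ 2 / (2 * μ)
          + (⟪y', zs⟫_ℝ - b) : ℝ) : EReal) := by
    rw [dualObj]
    refine le_trans (add_le_add hf1 (le_of_eq hg1)) (le_of_eq ?_)
    rw [← EReal.coe_add]
  refine le_trans hsum (EReal.coe_le_coe_iff.2 ?_)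
  have hip1 : ⟪y', A xs⟫_ℝ - ⟪y', zs⟫_ℝ = ⟪y', d⟫_ℝ := by rw [hd, inner_sub_right]
  have hip2 : ⟪y', d⟫_ℝ = ⟪y, d⟫_ℝ + γ * ‖d‖ ^ 2 := by
    rw [hy', inner_add_left, real_inner_smul_left, real_inner_self_eq_norm_sq]
  have hn2 : ‖ContinuousLinearMap.adjoint A (y' - y)‖ ^ 2 ≤ γ ^ 2 * ‖A‖ ^ 2 * ‖d‖ ^ 2 := by
    have h0 : (0:ℝ) ≤ ‖ContinuousLinearMap.adjoint A (y' - y)‖ := norm_nonneg _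
    nlinarith [hnorm, norm_nonneg A, norm_nonneg d, hγ]
  have hdivle : ‖ContinuousLinearMap.adjoint A (y' - y)‖ ^ 2 / (2 * μ)
      ≤ γ ^ 2 * ‖A‖ ^ 2 * ‖d‖ ^ 2 / (2 * μ) := by
    apply div_le_div_of_nonneg_right ?_ (by positivity)
    · exact hn2
  have : -(a + ⟪y', A xs⟫_ℝ) + ‖ContinuousLinearMap.adjoint A (y' - y)‖ ^ 2 / (2 * μ)
      + (⟪y', zs⟫_ℝ - b)
      = -(a + b + ⟪y', d⟫_ℝ) + ‖ContinuousLinearMap.adjoint A (y' - y)‖ ^ 2 / (2 * μ) := by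
    rw [← hip1]; ring
  rw [this, hip2]
  have hfin : γ ^ 2 * ‖A‖ ^ 2 * ‖d‖ ^ 2 / (2 * μ) = γ ^ 2 * ‖A‖ ^ 2 / (2 * μ) * ‖d‖ ^ 2 := by
    ring
  linarith [hdivle]


/-- For `0 < γ < μ_f/‖A‖²`, the AME and the dual objective have the same
infimum and the same set of minimizers. -/
theorem AME_inf_eq_and_argmin_eq
    {n m : ℕ} (μ γ : ℝ) (hμ : 0 < μ) (hγ : 0 < γ)
    (f : E n → EReal) (g : E m → EReal) (A : E n →L[ℝ] E m)
    (hf : ProperClosedConvex f) (hsc : StronglyConvexWithMod μ f)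
    (hg : ProperClosedConvex g)
    (hfeas : ∃ x, f x ≠ ⊤ ∧ g (A x) ≠ ⊤)
    (xmin : E m → E n)
    (hx : ∀ y x, f (xmin y) + ((⟪y, A (xmin y)⟫_ℝ : ℝ) : EReal)
        ≤ f x + ((⟪y, A x⟫_ℝ : ℝ) : EReal))
    (zmin : E m → E m)
    (hz : ∀ y, IsProx γ⁻¹ g (γ⁻¹ • y + A (xmin y)) (zmin y))
    (hγA : γ < μ / ‖A‖ ^ 2) :
    (⨅ y : E m, AME f g A γ xmin zmin y) = (⨅ y : E m, dualObj f g A y) ∧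
    {y : E m | ∀ w, AME f g A γ xmin zmin y ≤ AME f g A γ xmin zmin w}
      = {y : E m | ∀ w, dualObj f g A y ≤ dualObj f g A w} := by
  obtain ⟨x0, hx0f, hx0g⟩ := hfeas
  obtain ⟨⟨-, hfb⟩, -, -⟩ := hf
  obtain ⟨⟨-, hgb⟩, -, hgc⟩ := hg
  obtain ⟨a0, ha0⟩ := ereal_real_s7 hx0f (hfb x0)
  obtain ⟨b0, hb0⟩ := ereal_real_s7 hx0g (hgb (A x0))
  -- finiteness of the values at the minimizers
  have hfxt : ∀ y, f (xmin y) ≠ ⊤ := by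
    intro y h
    have h1 := hx y x0
    rw [h, ha0, ← EReal.coe_add, EReal.top_add_coe, top_le_iff] at h1
    exact EReal.coe_ne_top _ h1
  have hgzt : ∀ y, g (zmin y) ≠ ⊤ := by
    intro y h
    have h1 := hz y (A x0)
    rw [h, hb0, ← EReal.coe_add, EReal.top_add_coe, top_le_iff] at h1
    exact EReal.coe_ne_top _ h1
  set ar : E m → ℝ := fun y => (f (xmin y)).toReal with har
  set br : E m → ℝ := fun y => (g (zmin y)).toReal with hbr
  have haf : ∀ y, f (xmin y) = ((ar y : ℝ) : EReal) :=
    fun y => (EReal.coe_toReal (hfxt y) (hfb _)).symm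
  have hbg : ∀ y, g (zmin y) = ((br y : ℝ) : EReal) :=
    fun y => (EReal.coe_toReal (hgzt y) (hgb _)).symm
  set rr : E m → E m := fun y => A (xmin y) - zmin y with hrr
  set Tt : E m → E m := fun y => y + γ • rr y with hTt
  set αr : E m → ℝ := fun y => -(ar y + br y + (⟪y, rr y⟫_ℝ + γ / 2 * ‖rr y‖ ^ 2)) with hαr
  set c₁ : ℝ := γ / 2 - γ ^ 2 * ‖A‖ ^ 2 / (2 * μ) with hc₁def
  have hc₁ : 0 < c₁ := by
    rw [hc₁def]
    rcases eq_or_lt_of_le (norm_nonneg A) with hA | hA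
    · have h0 : γ ^ 2 * ‖A‖ ^ 2 / (2 * μ) = 0 := by rw [← hA]; norm_num
      rw [h0, sub_zero]; positivity
    · have hA2 : γ * ‖A‖ ^ 2 < μ := by
        rw [lt_div_iff₀ (by positivity)] at hγA
        linarith
      rw [sub_pos, div_lt_iff₀ (by positivity)]
      nlinarith
  have hflow : ∀ y x, ((ar y + μ / 2 * ‖x - xmin y‖ ^ 2 - ⟪y, A (x - xmin y)⟫_ℝ : ℝ) : EReal) ≤ f x :=
    fun y x => f_lower hμ hfb hsc A y (xmin y) (ar y) (haf y) (hx y) x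
  have hΦeq : ∀ y, AME f g A γ xmin zmin y = ((αr y : ℝ) : EReal) := by
    intro y
    show -(f (xmin y) + g (zmin y) + _) = _
    rw [haf y, hbg y, ← EReal.coe_add, ← EReal.coe_add, ← EReal.coe_neg]
  have hub : ∀ y, dualObj f g A (Tt y) ≤ ((αr y - c₁ * ‖rr y‖ ^ 2 : ℝ) : EReal) := by
    intro y
    have h := dual_ub hμ hγ hfb hgb hgc A y (xmin y) (zmin y) (ar y) (br y) (haf y) (hbg y)
      (hflow y) (hz y)
    refine le_trans h (le_of_eq ?_)
    rw [EReal.coe_eq_coe_iff, hαr, hc₁def, hrr]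
  have hlb : ∀ y, ((αr y + γ / 2 * ‖rr y‖ ^ 2 : ℝ) : EReal) ≤ dualObj f g A y := by
    intro y
    have h := dual_lb hfb A y (xmin y) (zmin y) (ar y) (br y) (haf y) (hbg y) (hx y)
    refine le_trans (le_of_eq ?_) h
    rw [EReal.coe_eq_coe_iff, hαr, hrr]
    ring
  have hT0 : ∀ y, rr y = 0 → Tt y = y := by
    intro y h
    rw [hTt]
    show y + γ • rr y = y
    rw [h, smul_zero, add_zero]
  have hinfle : (⨅ y : E m, AME f g A γ xmin zmin y) ≤ ⨅ y : E m, dualObj f g A y := by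
    refine le_iInf fun y => le_trans (iInf_le _ y) ?_
    rw [hΦeq y]
    refine le_trans (EReal.coe_le_coe_iff.2 ?_) (hlb y)
    have h0 : (0:ℝ) ≤ γ / 2 * ‖rr y‖ ^ 2 := by positivity
    linarith
  have hinfge : (⨅ y : E m, dualObj f g A y) ≤ ⨅ y : E m, AME f g A γ xmin zmin y := by
    refine le_iInf fun y => ?_
    refine le_trans (iInf_le _ (Tt y)) (le_trans (hub y) ?_)
    rw [hΦeq y]
    refine EReal.coe_le_coe_iff.2 ?_
    have h0 : (0:ℝ) ≤ c₁ * ‖rr y‖ ^ 2 := mul_nonneg hc₁.le (sq_nonneg _)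
    linarith
  have hinf : (⨅ y : E m, AME f g A γ xmin zmin y) = ⨅ y : E m, dualObj f g A y :=
    le_antisymm hinfle hinfge
  refine ⟨hinf, ?_⟩
  ext y
  simp only [Set.mem_setOf_eq]
  constructor
  · intro hy
    have hAy : AME f g A γ xmin zmin y = ⨅ w : E m, AME f g A γ xmin zmin w :=
      le_antisymm (le_iInf hy) (iInf_le _ y)
    have h1 : ((αr y : ℝ) : EReal) ≤ ((αr y - c₁ * ‖rr y‖ ^ 2 : ℝ) : EReal) := by
      calc ((αr y : ℝ) : EReal) = AME f g A γ xmin zmin y := (hΦeq y).symm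
        _ = ⨅ w : E m, AME f g A γ xmin zmin w := hAy
        _ = ⨅ w : E m, dualObj f g A w := hinf
        _ ≤ dualObj f g A (Tt y) := iInf_le _ _
        _ ≤ _ := hub y
    have hr0 : rr y = 0 := by
      rw [EReal.coe_le_coe_iff] at h1
      have h2 : c₁ * ‖rr y‖ ^ 2 ≤ 0 := by linarith
      have h4 : ‖rr y‖ ^ 2 = 0 := le_antisymm (by nlinarith [hc₁]) (sq_nonneg _)
      exact norm_eq_zero.mp ((pow_eq_zero_iff (by norm_num : (2:ℕ) ≠ 0)).mp h4)
    intro w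
    have hdy : dualObj f g A y ≤ ((αr y : ℝ) : EReal) := by
      have h := hub y
      rw [hT0 y hr0] at h
      refine le_trans h (le_of_eq ?_)
      rw [EReal.coe_eq_coe_iff, hr0]
      simp
    calc dualObj f g A y ≤ ((αr y : ℝ) : EReal) := hdy
      _ = AME f g A γ xmin zmin y := (hΦeq y).symm
      _ = ⨅ w' : E m, AME f g A γ xmin zmin w' := hAy
      _ = ⨅ w' : E m, dualObj f g A w' := hinf
      _ ≤ dualObj f g A w := iInf_le _ _
  · intro hy
    have hdy : dualObj f g A y = ⨅ w : E m, dualObj f g A w :=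
      le_antisymm (le_iInf hy) (iInf_le _ y)
    have h1 : ((αr y + γ / 2 * ‖rr y‖ ^ 2 : ℝ) : EReal) ≤ ((αr y : ℝ) : EReal) := by
      calc ((αr y + γ / 2 * ‖rr y‖ ^ 2 : ℝ) : EReal) ≤ dualObj f g A y := hlb y
        _ = ⨅ w : E m, dualObj f g A w := hdy
        _ = ⨅ w : E m, AME f g A γ xmin zmin w := hinf.symm
        _ ≤ AME f g A γ xmin zmin y := iInf_le _ _
        _ = ((αr y : ℝ) : EReal) := hΦeq y
    have hr0 : rr y = 0 := by
      rw [EReal.coe_le_coe_iff] at h1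
      have h2 : γ / 2 * ‖rr y‖ ^ 2 ≤ 0 := by linarith
      have h4 : ‖rr y‖ ^ 2 = 0 := le_antisymm (by nlinarith [hγ]) (sq_nonneg _)
      exact norm_eq_zero.mp ((pow_eq_zero_iff (by norm_num : (2:ℕ) ≠ 0)).mp h4)
    intro w
    have hge : ((αr y : ℝ) : EReal) ≤ dualObj f g A y := by
      refine le_trans (le_of_eq ?_) (hlb y)
      rw [EReal.coe_eq_coe_iff, hr0]
      simp
    calc AME f g A γ xmin zmin y = ((αr y : ℝ) : EReal) := hΦeq y
      _ ≤ dualObj f g A y := hge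
      _ = ⨅ w' : E m, dualObj f g A w' := hdy
      _ = ⨅ w' : E m, AME f g A γ xmin zmin w' := hinf.symm
      _ ≤ AME f g A γ xmin zmin w := iInf_le _ _
end
end

section
/- Under the standing assumptions, for all y, w ∈ ℝ^m and γ > 0: ψ(w) ≥ ψ_γ(y) + (γ/2)‖Ax(y) - z_γ(y)‖² + ⟨z_γ(y) - Ax(y), w - y⟩, where ψ(w) = f*(-Aᵀw) + g*(w). -/
open scoped InnerProductSpace RealInnerProductSpace
open Filter Topology

noncomputable section

/-- Two-points inequality:
`ψ(w) ≥ ψ_γ(y) + (γ/2)‖Ax(y) - z_γ(y)‖² + ⟨z_γ(y) - Ax(y), w - y⟩`. -/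
theorem dualObj_ge_AME_two_points
    {n m : ℕ} (μ γ : ℝ) (hμ : 0 < μ) (hγ : 0 < γ)
    (f : E n → EReal) (g : E m → EReal) (A : E n →L[ℝ] E m)
    (hf : ProperClosedConvex f) (hsc : StronglyConvexWithMod μ f)
    (hg : ProperClosedConvex g)
    (hfeas : ∃ x, f x ≠ ⊤ ∧ g (A x) ≠ ⊤)
    (xmin : E m → E n)
    (hx : ∀ y x, f (xmin y) + ((⟪y, A (xmin y)⟫_ℝ : ℝ) : EReal)
        ≤ f x + ((⟪y, A x⟫_ℝ : ℝ) : EReal))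
    (zmin : E m → E m)
    (hz : ∀ y, IsProx γ⁻¹ g (γ⁻¹ • y + A (xmin y)) (zmin y)) :
    ∀ y w : E m,
      AME f g A γ xmin zmin y
        + ((γ / 2 * ‖A (xmin y) - zmin y‖ ^ 2
            + ⟪zmin y - A (xmin y), w - y⟫_ℝ : ℝ) : EReal)
      ≤ dualObj f g A w := by
  intro y w
  set x := xmin y with hxdef
  set z := zmin y with hzdef
  have hfb := hf.1.2
  have hgb := hg.1.2
  set r : ℝ := ⟪y, A x - z⟫_ℝ + γ / 2 * ‖A x - z‖ ^ 2 with hr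
  set s : ℝ := γ / 2 * ‖A x - z‖ ^ 2 + ⟪z - A x, w - y⟫_ℝ with hs
  show -(f x + g z + (r : EReal)) + (s : EReal) ≤ dualObj f g A w
  by_cases hfx : f x = ⊤
  · rw [hfx, EReal.top_add_of_ne_bot (hgb z),
      EReal.top_add_of_ne_bot (by simp : (r:EReal) ≠ ⊥)]
    simp
  by_cases hgz : g z = ⊤
  · rw [hgz]
    rw [EReal.add_top_of_ne_bot (hfb x), EReal.top_add_of_ne_bot (by simp : (r:EReal) ≠ ⊥)]
    simp
  obtain ⟨a, ha⟩ : ∃ a : ℝ, f x = (a : EReal) := ⟨(f x).toReal, (EReal.coe_toReal hfx (hfb x)).symm⟩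
  obtain ⟨b, hb⟩ : ∃ b : ℝ, g z = (b : EReal) := ⟨(g z).toReal, (EReal.coe_toReal hgz (hgb z)).symm⟩
  have h1 : ((⟪x, -(ContinuousLinearMap.adjoint A w)⟫_ℝ - a : ℝ) : EReal)
      ≤ conjFn f (-(ContinuousLinearMap.adjoint A w)) := by
    have := le_iSup (fun u : E n => ((⟪u, -(ContinuousLinearMap.adjoint A w)⟫_ℝ : ℝ) : EReal) - f u) x
    rw [ha] at this
    rw [EReal.coe_sub]
    exact this
  have h2 : ((⟪z, w⟫_ℝ - b : ℝ) : EReal) ≤ conjFn g w := by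
    have := le_iSup (fun u : E m => ((⟪u, w⟫_ℝ : ℝ) : EReal) - g u) z
    rw [hb] at this
    rw [EReal.coe_sub]
    exact this
  have hadj : ⟪x, -(ContinuousLinearMap.adjoint A w)⟫_ℝ = -⟪A x, w⟫_ℝ := by
    rw [inner_neg_right, real_inner_comm, ContinuousLinearMap.adjoint_inner_left, real_inner_comm]
  have hsum := add_le_add h1 h2
  refine le_trans ?_ hsum
  rw [ha, hb, ← EReal.coe_add, ← EReal.coe_add, ← EReal.coe_neg, ← EReal.coe_add,
    ← EReal.coe_add]
  apply EReal.coe_le_coe_iff.mpr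
  rw [hadj, hr, hs]
  simp only [inner_sub_left, inner_sub_right]
  ring_nf
  linarith [real_inner_comm y (A x), real_inner_comm y z, real_inner_comm w z,
    real_inner_comm w (A x)]
end
end

section
/- Under the standing assumptions, for every y ∈ ℝ^m: (μ_f/2)‖x(y) - x⋆‖² ≤ ψ(y) - inf ψ, where x⋆ is the unique primal solution of minimizing f + g∘A and x(y) = argmin_x { f(x) + ⟨y, Ax⟩ }. -/
/-!
Write `p = f x⋆ + g (A x⋆)`. Fenchel–Young at `x(y)` and `A x⋆` gives
`ψ(y) ≥ ⟪y, A x⋆ - A x(y)⟫ - f (x(y)) - g (A x⋆)`, and since `x(y)` minimizes the `μ`-strongly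
convex function `f + ⟪y, A ·⟫`, also
`f (x(y)) + ⟪y, A x(y)⟫ + (μ/2)‖x(y) - x⋆‖² ≤ f x⋆ + ⟪y, A x⋆⟫`; hence
`ψ(y) ≥ -p + (μ/2)‖x(y) - x⋆‖²`. It remains to show `inf ψ ≤ -p`. The epigraph of the
perturbation function `u ↦ inf_x f x + g (A x + u)` is convex, and it is closed because strong
convexity makes `x ↦ f x + g (A x + u)` coercive uniformly in bounded `u`. A non-vertical
hyperplane separating `(0, p - ε)` from it is the graph of `u ↦ ⟪w, u⟫ + b` with `b > p - ε`,
and lying below the epigraph says exactly `ψ(w) ≤ -b`.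
-/

open scoped InnerProductSpace RealInnerProductSpace
open Filter Topology

noncomputable section

theorem EReal.iSup_add_iSup_le {ι κ : Sort*} {a : ι → EReal} {b : κ → EReal} {c : EReal}
    (h : ∀ i j, a i + b j ≤ c) : (⨆ i, a i) + (⨆ j, b j) ≤ c :=
  EReal.add_le_of_forall_lt fun a' ha' b' hb' => by
    obtain ⟨i, hi⟩ := lt_iSup_iff.1 ha'
    obtain ⟨j, hj⟩ := lt_iSup_iff.1 hb'
    exact (add_le_add hi.le hj.le).trans (h i j)

theorem LowerSemicontinuous.isClosed_epigraph_real {α : Type*} [TopologicalSpace α]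
    {h : α → EReal} (hh : LowerSemicontinuous h) : IsClosed {p : α × ℝ | h p.1 ≤ p.2} :=
  hh.isClosed_epigraph.preimage
    (continuous_fst.prodMk (continuous_coe_real_ereal.comp continuous_snd))

theorem norm_smul_add_smul_sq {V : Type*} [NormedAddCommGroup V] [InnerProductSpace ℝ V]
    (x y : V) {a b : ℝ} (hab : a + b = 1) :
    ‖a • x + b • y‖ ^ 2 = a * ‖x‖ ^ 2 + b * ‖y‖ ^ 2 - a * b * ‖x - y‖ ^ 2 := by
  rw [norm_add_sq_real, norm_sub_sq_real, norm_smul, norm_smul, real_inner_smul_left,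
    real_inner_smul_right, mul_pow, mul_pow, Real.norm_eq_abs, Real.norm_eq_abs, sq_abs, sq_abs]
  obtain rfl := eq_sub_of_add_eq hab
  ring

theorem le_max_of_mul_sq_le {a b c t : ℝ} (ha : 0 < a) (ht : 0 ≤ t)
    (h : a * t ^ 2 ≤ b + c * t) : t ≤ max 1 ((|b| + |c|) / a) := by
  by_contra! hlt
  obtain ⟨h1, h2⟩ := max_lt_iff.1 hlt
  rw [div_lt_iff₀ ha] at h2
  have ht0 : 0 < t := by linarith
  nlinarith [mul_lt_mul_of_pos_right h2 ht0, le_abs_self b, le_abs_self c, abs_nonneg b,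
    mul_le_mul_of_nonneg_left h1.le (abs_nonneg b), mul_le_mul_of_nonneg_right (le_abs_self c) ht]

section Separation

variable {V : Type*} [NormedAddCommGroup V] [NormedSpace ℝ V]

theorem exists_affine_lt_of_notMem {S : Set (V × ℝ)} (hconv : Convex ℝ S) (hclosed : IsClosed S)
    {x₀ : V} {t₀ r : ℝ} (hray : ∀ t, t₀ ≤ t → (x₀, t) ∈ S) (hr : (x₀, r) ∉ S) :
    ∃ (ℓ : V →L[ℝ] ℝ) (b : ℝ), r < ℓ x₀ + b ∧ ∀ p ∈ S, ℓ p.1 + b < p.2 := by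
  obtain ⟨φ, u, hφr, hφS⟩ := geometric_hahn_banach_point_closed hconv hclosed hr
  set L : V →L[ℝ] ℝ := φ.comp (ContinuousLinearMap.inl ℝ V ℝ)
  set c : ℝ := φ (0, 1)
  have hφ : ∀ p : V × ℝ, φ p = L p.1 + p.2 * c := fun p => by
    rw [← smul_eq_mul, ← map_smul, ContinuousLinearMap.comp_apply, ← map_add]
    simp
  have hray' : ∀ t, t₀ ≤ t → u < L x₀ + t * c := fun t ht => by
    simpa [hφ] using hφS _ (hray t ht)
  rw [hφ] at hφr
  have hc : 0 < c := by
    by_contra! hc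
    rcases hc.lt_or_eq with hc | hc
    · -- far enough up the ray, `L x₀ + t * c` drops to `u`
      set d := (L x₀ + t₀ * c - u) / -c
      have hd : d * c = u - L x₀ - t₀ * c := by
        have := hc.ne
        simp only [d]
        field_simp
        ring
      have := hray' (t₀ + d)
        (le_add_of_nonneg_right (div_nonneg (sub_nonneg.2 (hray' t₀ le_rfl).le) (by linarith)))
      linarith
    · have := hray' t₀ le_rfl
      simp only [hc, mul_zero] at this hφr
      linarith
  have hℓ : ∀ x, (-(1 / c) • L) x + u / c = (u - L x) / c := fun x => by
    simp only [FunLike.coe_smul, Pi.smul_apply, smul_eq_mul]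
    ring
  refine ⟨-(1 / c) • L, u / c, ?_, fun p hp => ?_⟩
  · rw [hℓ, lt_div_iff₀ hc]
    linarith
  · rw [hℓ, div_lt_iff₀ hc]
    linarith [hφ p, hφS p hp]

end Separation

section Perturbation

variable {n m : ℕ}

theorem EConvexOn.combo_le {h : E n → EReal} (hh : EConvexOn h) {x y : E n} {s t a b : ℝ}
    (hx : h x ≤ s) (hy : h y ≤ t) (ha : 0 ≤ a) (hb : 0 ≤ b) (hab : a + b = 1) :
    h (a • x + b • y) ≤ ((a * s + b * t : ℝ) : EReal) := by
  calc h (a • x + b • y) ≤ (a : EReal) * h x + (b : EReal) * h y := hh x y a b ha hb hab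
    _ ≤ (a : EReal) * s + (b : EReal) * t := by
      gcongr
    _ = ((a * s + b * t : ℝ) : EReal) := by norm_cast

theorem EConvexOn.convex_epigraph {h : E n → EReal} (hh : EConvexOn h) :
    Convex ℝ {p : E n × ℝ | h p.1 ≤ p.2} :=
  fun _ hp _ hq _ _ ha hb hab => hh.combo_le hp hq ha hb hab

theorem EConvexOn.exists_affine_le {h : E n → EReal} (hh : EConvexOn h)
    (hl : LowerSemicontinuous h) {x₀ : E n} {r₀ : ℝ} (h₀ : h x₀ = r₀) :
    ∃ (ℓ : E n →L[ℝ] ℝ) (b : ℝ), ∀ x, ((ℓ x + b : ℝ) : EReal) ≤ h x := by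
  obtain ⟨ℓ, b, -, hℓ⟩ := exists_affine_lt_of_notMem hh.convex_epigraph hl.isClosed_epigraph_real
    (x₀ := x₀) (t₀ := r₀) (r := r₀ - 1) (fun t ht => by simpa [h₀] using ht)
    (by show ¬h x₀ ≤ ((r₀ - 1 : ℝ) : EReal); rw [h₀, EReal.coe_le_coe_iff]; linarith)
  refine ⟨ℓ, b, fun x => EReal.le_of_forall_lt_iff_le.1 fun t ht => ?_⟩
  exact_mod_cast (hℓ (x, t) ht.le).le

theorem StronglyConvexWithMod.exists_quadratic_le {μ : ℝ} {f : E n → EReal}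
    (hsc : StronglyConvexWithMod μ f) (hl : LowerSemicontinuous f) {x₀ : E n} {r₀ : ℝ}
    (h₀ : f x₀ = r₀) :
    ∃ (ℓ : E n →L[ℝ] ℝ) (b : ℝ), ∀ x, ((μ / 2 * ‖x‖ ^ 2 + ℓ x + b : ℝ) : EReal) ≤ f x := by
  have hl' : LowerSemicontinuous fun x => f x - ((μ / 2 * ‖x‖ ^ 2 : ℝ) : EReal) := by
    refine hl.add' (continuous_neg.comp (continuous_coe_real_ereal.comp
      (by fun_prop))).lowerSemicontinuous fun x => EReal.continuousAt_add ?_ ?_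
    · exact .inr (by rw [← EReal.coe_neg]; exact EReal.coe_ne_bot _)
    · exact .inr (by rw [← EReal.coe_neg]; exact EReal.coe_ne_top _)
  obtain ⟨ℓ, b, hℓ⟩ := hsc.exists_affine_le hl' (x₀ := x₀) (r₀ := r₀ - μ / 2 * ‖x₀‖ ^ 2)
    (by simp [h₀])
  refine ⟨ℓ, b, fun x => ?_⟩
  have := hℓ x
  rw [EReal.le_sub_iff_add_le (.inl (EReal.coe_ne_bot _)) (.inl (EReal.coe_ne_top _))] at this
  calc ((μ / 2 * ‖x‖ ^ 2 + ℓ x + b : ℝ) : EReal)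
      = ((ℓ x + b : ℝ) : EReal) + ((μ / 2 * ‖x‖ ^ 2 : ℝ) : EReal) := by
        rw [← EReal.coe_add]; congr 1; ring
    _ ≤ f x := this

theorem StronglyConvexWithMod.combo_le {μ : ℝ} {f : E n → EReal}
    (hsc : StronglyConvexWithMod μ f) {x y : E n} {s t a b : ℝ} (hx : f x = s) (hy : f y = t)
    (ha : 0 ≤ a) (hb : 0 ≤ b) (hab : a + b = 1) :
    f (a • x + b • y) ≤ ((a * s + b * t - μ / 2 * (a * b * ‖x - y‖ ^ 2) : ℝ) : EReal) := by
  have h := EConvexOn.combo_le hsc (s := s - μ / 2 * ‖x‖ ^ 2) (t := t - μ / 2 * ‖y‖ ^ 2)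
    (by rw [hx, EReal.coe_sub]) (by rw [hy, EReal.coe_sub]) ha hb hab
  rw [EReal.sub_le_iff_le_add (.inl (EReal.coe_ne_bot _)) (.inl (EReal.coe_ne_top _)),
    ← EReal.coe_add, norm_smul_add_smul_sq x y hab] at h
  convert h using 2
  ring

/-- Compare the minimizer `p` with `(1 - t) • p + t • z` and let `t → 0`. -/
theorem StronglyConvexWithMod.add_sq_le_of_forall_le {μ : ℝ} {f : E n → EReal}
    (hsc : StronglyConvexWithMod μ f) (ℓ : E n →ₗ[ℝ] ℝ) {p z : E n} {s t : ℝ}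
    (hp : f p = s) (hz : f z = t) (hmin : ∀ x, f p + ℓ p ≤ f x + ℓ x) :
    s + ℓ p + μ / 2 * ‖p - z‖ ^ 2 ≤ t + ℓ z := by
  have hseg : ∀ a ∈ Set.Ioo (0 : ℝ) 1, s + ℓ p + μ / 2 * ((1 - a) * ‖p - z‖ ^ 2) ≤ t + ℓ z := by
    rintro a ⟨ha0, ha1⟩
    have hfa := hsc.combo_le hp hz (by linarith : 0 ≤ 1 - a) ha0.le (by ring)
    have hmina := (hmin ((1 - a) • p + a • z)).trans (add_le_add hfa le_rfl)
    rw [hp, map_add, map_smul, map_smul, ← EReal.coe_add, ← EReal.coe_add,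
      EReal.coe_le_coe_iff, smul_eq_mul, smul_eq_mul] at hmina
    have : a * (s + ℓ p + μ / 2 * ((1 - a) * ‖p - z‖ ^ 2)) ≤ a * (t + ℓ z) := by nlinarith
    exact le_of_mul_le_mul_left this ha0
  have hlim : Tendsto (fun a : ℝ => s + ℓ p + μ / 2 * ((1 - a) * ‖p - z‖ ^ 2))
      (𝓝[>] 0) (𝓝 (s + ℓ p + μ / 2 * ‖p - z‖ ^ 2)) := by
    refine Tendsto.mono_left ?_ nhdsWithin_le_nhds
    convert (by fun_prop : Continuous fun a : ℝ =>
      s + ℓ p + μ / 2 * ((1 - a) * ‖p - z‖ ^ 2)).tendsto 0 using 2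
    simp
  exact le_of_tendsto hlim (eventually_of_mem (Ioo_mem_nhdsGT one_pos) hseg)

def perturbationEpigraph (f : E n → EReal) (g : E m → EReal) (A : E n →L[ℝ] E m) :
    Set (E m × ℝ) :=
  {q | ∃ x, f x + g (A x + q.1) ≤ q.2}

theorem convex_perturbationEpigraph {f : E n → EReal} {g : E m → EReal} (A : E n →L[ℝ] E m)
    (hf : EConvexOn f) (hg : EConvexOn g) (hfbot : ∀ x, f x ≠ ⊥) (hgbot : ∀ z, g z ≠ ⊥) :
    Convex ℝ (perturbationEpigraph f g A) := by
  rintro ⟨u₁, r₁⟩ ⟨x₁, h₁⟩ ⟨u₂, r₂⟩ ⟨x₂, h₂⟩ a b ha hb hab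
  dsimp only at h₁ h₂
  obtain ⟨hf₁, hg₁⟩ := (EReal.add_ne_top_iff_ne_top₂ (hfbot _) (hgbot _)).1
    (ne_top_of_le_ne_top (EReal.coe_ne_top _) h₁)
  obtain ⟨hf₂, hg₂⟩ := (EReal.add_ne_top_iff_ne_top₂ (hfbot _) (hgbot _)).1
    (ne_top_of_le_ne_top (EReal.coe_ne_top _) h₂)
  lift f x₁ to ℝ using ⟨hf₁, hfbot _⟩ with s₁ hs₁
  lift f x₂ to ℝ using ⟨hf₂, hfbot _⟩ with s₂ hs₂
  lift g (A x₁ + u₁) to ℝ using ⟨hg₁, hgbot _⟩ with t₁ ht₁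
  lift g (A x₂ + u₂) to ℝ using ⟨hg₂, hgbot _⟩ with t₂ ht₂
  refine ⟨a • x₁ + b • x₂, ?_⟩
  have hA : A (a • x₁ + b • x₂) + (a • (u₁, r₁) + b • (u₂, r₂)).1
      = a • (A x₁ + u₁) + b • (A x₂ + u₂) := by
    simp only [map_add, map_smul, Prod.fst_add, Prod.smul_fst, smul_add]
    abel
  rw [hA]
  calc f (a • x₁ + b • x₂) + g (a • (A x₁ + u₁) + b • (A x₂ + u₂))
      ≤ ((a * s₁ + b * s₂ : ℝ) : EReal) + ((a * t₁ + b * t₂ : ℝ) : EReal) :=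
        add_le_add (hf.combo_le hs₁.ge hs₂.ge ha hb hab) (hg.combo_le ht₁.ge ht₂.ge ha hb hab)
    _ ≤ ((a • (u₁, r₁) + b • (u₂, r₂)).2 : EReal) := by
        rw [← EReal.coe_add, EReal.coe_le_coe_iff] at h₁ h₂ ⊢
        simp only [Prod.snd_add, Prod.smul_snd, smul_eq_mul]
        nlinarith

/-- Coercivity: the quadratic minorant of `f` dominates the affine minorant of `g`. -/
theorem isBounded_perturbation_sublevel {μ : ℝ} (hμ : 0 < μ) {f : E n → EReal}
    {g : E m → EReal} (A : E n →L[ℝ] E m) (hf : ProperClosedConvex f)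
    (hsc : StronglyConvexWithMod μ f) (hg : ProperClosedConvex g) (U R : ℝ) :
    Bornology.IsBounded
      {x : E n | ∃ (u : E m) (r : ℝ), ‖u‖ ≤ U ∧ r ≤ R ∧ f x + g (A x + u) ≤ r} := by
  obtain ⟨⟨⟨x₀, hx₀⟩, hfbot⟩, hfl, -⟩ := hf
  obtain ⟨⟨⟨z₀, hz₀⟩, hgbot⟩, hgl, hgc⟩ := hg
  lift f x₀ to ℝ using ⟨hx₀, hfbot x₀⟩ with s₀ hs₀
  lift g z₀ to ℝ using ⟨hz₀, hgbot z₀⟩ with t₀ ht₀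
  obtain ⟨ℓf, bf, hℓf⟩ := hsc.exists_quadratic_le hfl hs₀.symm
  obtain ⟨ℓg, bg, hℓg⟩ := hgc.exists_affine_le hgl ht₀.symm
  rw [isBounded_iff_forall_norm_le]
  refine ⟨max 1 ((|R - bf - bg + ‖ℓg‖ * U| + |‖ℓf‖ + ‖ℓg‖ * ‖A‖|) / (μ / 2)), ?_⟩
  rintro x ⟨u, r, hu, hr, hxu⟩
  refine le_max_of_mul_sq_le (half_pos hμ) (norm_nonneg x) ?_
  have hsum := (add_le_add (hℓf x) (hℓg (A x + u))).trans hxu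
  rw [← EReal.coe_add, EReal.coe_le_coe_iff] at hsum
  have hf' : -(‖ℓf‖ * ‖x‖) ≤ ℓf x := neg_le_of_abs_le (ℓf.le_opNorm x)
  have hg' : -(‖ℓg‖ * (‖A‖ * ‖x‖ + U)) ≤ ℓg (A x + u) :=
    neg_le_of_abs_le ((ℓg.le_opNorm _).trans (mul_le_mul_of_nonneg_left
      ((norm_add_le _ _).trans (add_le_add (A.le_opNorm x) hu)) (norm_nonneg _)))
  nlinarith

/-- Minimizing sequences are bounded by coercivity, so a subsequence converges and lower
semicontinuity of `(x, u) ↦ f x + g (A x + u)` passes to the limit. -/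
theorem isClosed_perturbationEpigraph {μ : ℝ} (hμ : 0 < μ) {f : E n → EReal}
    {g : E m → EReal} (A : E n →L[ℝ] E m) (hf : ProperClosedConvex f)
    (hsc : StronglyConvexWithMod μ f) (hg : ProperClosedConvex g) :
    IsClosed (perturbationEpigraph f g A) := by
  refine isClosed_of_closure_subset fun q hq => ?_
  obtain ⟨p, hpS, hpq⟩ := mem_closure_iff_seq_limit.1 hq
  choose x hx using hpS
  obtain ⟨U, hU⟩ := ((continuous_norm.comp continuous_fst).tendsto q |>.comp hpq).bddAbove_range
  obtain ⟨R, hR⟩ := ((continuous_snd.tendsto q).comp hpq).bddAbove_range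
  obtain ⟨xbar, -, φ, hφ, hxφ⟩ := tendsto_subseq_of_bounded
    (isBounded_perturbation_sublevel hμ A hf hsc hg U R)
    fun k => ⟨(p k).1, (p k).2, hU ⟨k, rfl⟩, hR ⟨k, rfl⟩, hx k⟩
  have hΦ : LowerSemicontinuous fun w : E n × E m => f w.1 + g (A w.1 + w.2) :=
    (hf.2.1.comp continuous_fst).add' (hg.2.1.comp (by fun_prop)) fun w =>
      EReal.continuousAt_add (.inr (hg.1.2 _)) (.inl (hf.1.2 _))
  exact ⟨xbar, hΦ.isClosed_epigraph_real.mem_of_tendsto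
    (((hxφ.prodMk_nhds ((hpq.comp hφ.tendsto_atTop).fst_nhds))).prodMk_nhds
      (hpq.comp hφ.tendsto_atTop).snd_nhds)
    (Eventually.of_forall fun k => hx (φ k))⟩

theorem le_conjFn {h : E n → EReal} {x : E n} {s : ℝ} (hx : h x = s) (v : E n) :
    ((⟪x, v⟫_ℝ - s : ℝ) : EReal) ≤ conjFn h v :=
  le_iSup_of_le x (by rw [hx, EReal.coe_sub])

theorem le_dualObj {f : E n → EReal} {g : E m → EReal} (A : E n →L[ℝ] E m) {x : E n} {z : E m}
    {s t : ℝ} (hx : f x = s) (hz : g z = t) (y : E m) :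
    ((⟪y, z - A x⟫_ℝ - (s + t) : ℝ) : EReal) ≤ dualObj f g A y := by
  have h := add_le_add (le_conjFn hx (-(ContinuousLinearMap.adjoint A y))) (le_conjFn hz y)
  rw [← EReal.coe_add, inner_neg_right, ContinuousLinearMap.adjoint_inner_right] at h
  rw [dualObj]
  convert h using 2
  rw [inner_sub_right, real_inner_comm y z, real_inner_comm y (A x)]
  ring

theorem dualObj_le {f : E n → EReal} {g : E m → EReal} (A : E n →L[ℝ] E m)
    (hfbot : ∀ x, f x ≠ ⊥) (hgbot : ∀ z, g z ≠ ⊥) {y : E m} {c : ℝ}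
    (h : ∀ x z (s t : ℝ), f x = s → g z = t → ⟪y, z - A x⟫_ℝ - (s + t) ≤ c) :
    dualObj f g A y ≤ c := by
  refine EReal.iSup_add_iSup_le fun x z => ?_
  rcases eq_or_ne (f x) ⊤ with hfx | hfx
  · simp [hfx]
  rcases eq_or_ne (g z) ⊤ with hgz | hgz
  · simp [hgz]
  lift f x to ℝ using ⟨hfx, hfbot x⟩ with s hs
  lift g z to ℝ using ⟨hgz, hgbot z⟩ with t ht
  have := h x z s t hs.symm ht.symm
  rw [← EReal.coe_sub, ← EReal.coe_sub, ← EReal.coe_add, EReal.coe_le_coe_iff, inner_neg_right,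
    ContinuousLinearMap.adjoint_inner_right, real_inner_comm y z, real_inner_comm y (A x)]
  rw [inner_sub_right] at this
  linarith

theorem iInf_dualObj_le {μ : ℝ} (hμ : 0 < μ) {f : E n → EReal} {g : E m → EReal}
    (A : E n →L[ℝ] E m) (hf : ProperClosedConvex f) (hsc : StronglyConvexWithMod μ f)
    (hg : ProperClosedConvex g) {xstar : E n} (hxstar : ∀ x, f xstar + g (A xstar) ≤ f x + g (A x))
    {s t : ℝ} (hs : f xstar = s) (ht : g (A xstar) = t) :
    (⨅ w : E m, dualObj f g A w) ≤ ((-(s + t) : ℝ) : EReal) := by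
  refine EReal.le_of_forall_lt_iff_le.1 fun c hc => ?_
  rw [EReal.coe_lt_coe_iff] at hc
  have hray : ∀ r, s + t ≤ r → ((0 : E m), r) ∈ perturbationEpigraph f g A := fun r hr =>
    ⟨xstar, by rw [add_zero, hs, ht, ← EReal.coe_add]; exact_mod_cast hr⟩
  have hbelow : ((0 : E m), -c) ∉ perturbationEpigraph f g A := by
    rintro ⟨x, hx⟩
    dsimp only at hx
    rw [add_zero] at hx
    have := (hxstar x).trans hx
    rw [hs, ht, ← EReal.coe_add, EReal.coe_le_coe_iff] at this
    linarith
  obtain ⟨ℓ, b, hb, hℓ⟩ := exists_affine_lt_of_notMem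
    (convex_perturbationEpigraph A hf.2.2 hg.2.2 hf.1.2 hg.1.2)
    (isClosed_perturbationEpigraph hμ A hf hsc hg) hray hbelow
  set w := (InnerProductSpace.toDual ℝ (E m)).symm ℓ
  have hψw : dualObj f g A w ≤ ((-b : ℝ) : EReal) :=
    dualObj_le A hf.1.2 hg.1.2 fun x z s' t' hx hz => by
      have := hℓ (z - A x, s' + t') ⟨x, by simp [hx, hz]⟩
      rw [InnerProductSpace.toDual_symm_apply]
      dsimp only at this
      linarith
  calc (⨅ w : E m, dualObj f g A w) ≤ dualObj f g A w := iInf_le _ w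
    _ ≤ ((-b : ℝ) : EReal) := hψw
    _ ≤ c := by
      rw [EReal.coe_le_coe_iff]
      simp only [map_zero, zero_add] at hb
      linarith

end Perturbation

theorem primal_gap_le_dual_gap_general
    {n m : ℕ} (μ : ℝ) (hμ : 0 < μ)
    (f : E n → EReal) (g : E m → EReal) (A : E n →L[ℝ] E m)
    (hf : ProperClosedConvex f) (hsc : StronglyConvexWithMod μ f)
    (hg : ProperClosedConvex g)
    (hfeas : ∃ x, f x ≠ ⊤ ∧ g (A x) ≠ ⊤)
    (xmin : E m → E n)
    (hx : ∀ y x, f (xmin y) + ((⟪y, A (xmin y)⟫_ℝ : ℝ) : EReal)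
        ≤ f x + ((⟪y, A x⟫_ℝ : ℝ) : EReal))
    (xstar : E n) (hxstar : ∀ x, f xstar + g (A xstar) ≤ f x + g (A x)) :
    ∀ y : E m,
      (⨅ w : E m, dualObj f g A w) + ((μ / 2 * ‖xmin y - xstar‖ ^ 2 : ℝ) : EReal)
        ≤ dualObj f g A y := by
  intro y
  obtain ⟨x₀, hfx₀, hgx₀⟩ := hfeas
  obtain ⟨hfs, hgs⟩ := (EReal.add_ne_top_iff_ne_top₂ (hf.1.2 _) (hg.1.2 _)).1
    (ne_top_of_le_ne_top (EReal.add_ne_top hfx₀ hgx₀) (hxstar x₀))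
  have hfy : f (xmin y) ≠ ⊤ := (EReal.add_ne_top_iff_ne_top_left (EReal.coe_ne_bot _)
    (EReal.coe_ne_top _)).1 (ne_top_of_le_ne_top (EReal.add_ne_top hfx₀ (EReal.coe_ne_top _))
      (hx y x₀))
  obtain ⟨s, hs⟩ : ∃ s : ℝ, f xstar = s := ⟨_, (EReal.coe_toReal hfs (hf.1.2 _)).symm⟩
  obtain ⟨t, ht⟩ : ∃ t : ℝ, g (A xstar) = t := ⟨_, (EReal.coe_toReal hgs (hg.1.2 _)).symm⟩
  obtain ⟨s', hs'⟩ : ∃ s' : ℝ, f (xmin y) = s' := ⟨_, (EReal.coe_toReal hfy (hf.1.2 _)).symm⟩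
  have hgrowth : s' + ⟪y, A (xmin y)⟫_ℝ + μ / 2 * ‖xmin y - xstar‖ ^ 2 ≤ s + ⟪y, A xstar⟫_ℝ :=
    hsc.add_sq_le_of_forall_le ((innerₛₗ ℝ y).comp A.toLinearMap) hs' hs (hx y)
  have hdual := iInf_dualObj_le hμ A hf hsc hg hxstar hs ht
  calc (⨅ w : E m, dualObj f g A w) + ((μ / 2 * ‖xmin y - xstar‖ ^ 2 : ℝ) : EReal)
      ≤ ((-(s + t) + μ / 2 * ‖xmin y - xstar‖ ^ 2 : ℝ) : EReal) := by
        rw [EReal.coe_add]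
        exact add_le_add hdual le_rfl
    _ ≤ ((⟪y, A xstar - A (xmin y)⟫_ℝ - (s' + t) : ℝ) : EReal) := by
        rw [EReal.coe_le_coe_iff, inner_sub_right]
        linarith
    _ ≤ dualObj f g A y := le_dualObj A hs' ht y

/-- Primal-dual bound: `(μ_f/2)‖x(y) - x⋆‖² ≤ ψ(y) - inf ψ`. -/
theorem primal_gap_le_dual_gap
    {n m : ℕ} (μ γ : ℝ) (hμ : 0 < μ) (hγ : 0 < γ)
    (f : E n → EReal) (g : E m → EReal) (A : E n →L[ℝ] E m)
    (hf : ProperClosedConvex f) (hsc : StronglyConvexWithMod μ f)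
    (hg : ProperClosedConvex g)
    (hfeas : ∃ x, f x ≠ ⊤ ∧ g (A x) ≠ ⊤)
    (xmin : E m → E n)
    (hx : ∀ y x, f (xmin y) + ((⟪y, A (xmin y)⟫_ℝ : ℝ) : EReal)
        ≤ f x + ((⟪y, A x⟫_ℝ : ℝ) : EReal))
    (zmin : E m → E m)
    (hz : ∀ y, IsProx γ⁻¹ g (γ⁻¹ • y + A (xmin y)) (zmin y))
    (xstar : E n) (hxstar : ∀ x, f xstar + g (A xstar) ≤ f x + g (A x)) :
    ∀ y : E m,
      (⨅ w : E m, dualObj f g A w) + ((μ / 2 * ‖xmin y - xstar‖ ^ 2 : ℝ) : EReal)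
        ≤ dualObj f g A y :=
  primal_gap_le_dual_gap_general μ hμ f g A hf hsc hg hfeas xmin hx xstar hxstar
end
end

section
/- Let ψ : ℝ^m → ℝ ∪ {∞} be proper closed convex with nonempty bounded set of minimizers, and suppose a sequence {y^k} satisfies ψ(y^{k+1}) ≤ min_{w} { ψ(w) + (1/(2γ))‖w - y^k‖² } (i.e., ψ(y^{k+1}) ≤ ψ^γ(y^k)) with ψ(y^{k+1}) ≤ ψ(y^k) for all k. If D > 0 bounds dist(y, argmin ψ) on the initial sublevel set {y : ψ(y) ≤ ψ(y^0)}, then ψ(y^k) - inf ψ ≤ 2D²/(γk) for all k ≥ 1. -/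
open scoped InnerProductSpace RealInnerProductSpace
open Filter Topology

noncomputable section

/-! Pick a minimizer `w` within distance `D` of `y^k` (the iterates stay in the initial sublevel
set) and test the Moreau envelope at `(1 - α) y^k + α w`: convexity turns the descent inequality
into `e_{k+1} ≤ (1 - α) e_k + α² D² / (2γ)` for the gap `e_k = ψ(y^k) - inf ψ`. The choice `α = 1`
gives `e_1 ≤ D² / (2γ)`, and `α = 2 / (k + 1)` propagates `e_k ≤ 2D² / (γk)` by induction. -/

theorem le_two_mul_div_of_interpolated_descent {e : ℕ → ℝ} {c : ℝ} (hc : 0 ≤ c)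
    (h₁ : e 1 ≤ 2 * c)
    (hstep : ∀ k, 1 ≤ k → ∀ α : ℝ, 0 ≤ α → α ≤ 1 → e (k + 1) ≤ (1 - α) * e k + α ^ 2 * c / 2) :
    ∀ k, 1 ≤ k → e k ≤ 2 * c / k := by
  intro k hk
  induction k, hk using Nat.le_induction with
  | base => simpa using h₁
  | succ k hk ih =>
    have hk' : (1 : ℝ) ≤ k := by exact_mod_cast hk
    have hα₁ : 2 / ((k : ℝ) + 1) ≤ 1 := by rw [div_le_one (by positivity)]; linarith
    calc e (k + 1) ≤ (1 - 2 / (k + 1)) * e k + (2 / (k + 1)) ^ 2 * c / 2 :=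
          hstep k hk _ (by positivity) hα₁
      _ ≤ (1 - 2 / (k + 1)) * (2 * c / k) + (2 / (k + 1)) ^ 2 * c / 2 := by gcongr
      _ = 2 * c / (k + 1) - 2 * c / (k * (k + 1) ^ 2) := by field_simp; ring
      _ ≤ 2 * c / ((k + 1 : ℕ) : ℝ) := by
          push_cast
          linarith [show 0 ≤ 2 * c / (k * (k + 1) ^ 2) by positivity]

section

variable {n : ℕ} {f : E n → EReal}

theorem EConvexOn.moreauEnv_le (hf : EConvexOn f) (γ : ℝ) (x w : E n) {α : ℝ}
    (hα₀ : 0 ≤ α) (hα₁ : α ≤ 1) :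
    moreauEnv γ f x ≤ ((1 - α : ℝ) : EReal) * f x + (α : EReal) * f w
      + ((α ^ 2 / (2 * γ) * ‖w - x‖ ^ 2 : ℝ) : EReal) := by
  have hnorm : ‖((1 - α) • x + α • w) - x‖ = α * ‖w - x‖ := by
    rw [show (1 - α) • x + α • w - x = α • (w - x) by module, norm_smul, Real.norm_of_nonneg hα₀]
  calc moreauEnv γ f x
      ≤ f ((1 - α) • x + α • w) + ((1 / (2 * γ) * ‖(1 - α) • x + α • w - x‖ ^ 2 : ℝ) : EReal) :=
        iInf_le _ _
    _ ≤ ((1 - α : ℝ) : EReal) * f x + (α : EReal) * f w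
        + ((α ^ 2 / (2 * γ) * ‖w - x‖ ^ 2 : ℝ) : EReal) := by
        rw [hnorm, show 1 / (2 * γ) * (α * ‖w - x‖) ^ 2 = α ^ 2 / (2 * γ) * ‖w - x‖ ^ 2 by ring]
        exact add_le_add_left (hf x w (1 - α) α (by linarith) hα₀ (by ring)) _

theorem EConvexOn.le_of_le_moreauEnv (hf : EConvexOn f) {γ D s α : ℝ} (hγ : 0 ≤ γ)
    {x x' w : E n} (hx' : f x' ≤ moreauEnv γ f x) (hw : f w = s) (hxw : ‖x - w‖ ≤ D)
    (hα₀ : 0 ≤ α) (hα₁ : α ≤ 1) :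
    f x' ≤ ((1 - α : ℝ) : EReal) * f x + ((α * s + α ^ 2 * D ^ 2 / (2 * γ) : ℝ) : EReal) := by
  have hpen : α ^ 2 / (2 * γ) * ‖w - x‖ ^ 2 ≤ α ^ 2 * D ^ 2 / (2 * γ) := by
    rw [norm_sub_rev, div_mul_eq_mul_div]
    gcongr
  calc f x' ≤ ((1 - α : ℝ) : EReal) * f x + (α : EReal) * f w
        + ((α ^ 2 / (2 * γ) * ‖w - x‖ ^ 2 : ℝ) : EReal) :=
        hx'.trans (hf.moreauEnv_le γ x w hα₀ hα₁)
    _ ≤ ((1 - α : ℝ) : EReal) * f x + (α : EReal) * f w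
        + ((α ^ 2 * D ^ 2 / (2 * γ) : ℝ) : EReal) := by gcongr
    _ = _ := by rw [hw, ← EReal.coe_mul, add_assoc, ← EReal.coe_add]

end

theorem le_coe_add_two_mul_div_of_interpolated_descent {a : ℕ → EReal} {s c : ℝ} (hc : 0 ≤ c)
    (hbot : ∀ k, a k ≠ ⊥)
    (hstep : ∀ k, ∀ α : ℝ, 0 ≤ α → α ≤ 1 →
      a (k + 1) ≤ ((1 - α : ℝ) : EReal) * a k + ((α * s + α ^ 2 * c / 2 : ℝ) : EReal)) :
    ∀ k, 1 ≤ k → a k ≤ ((s + 2 * c / k : ℝ) : EReal) := by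
  have hfirst (k : ℕ) : a (k + 1) ≤ ((s + c / 2 : ℝ) : EReal) := by
    simpa using hstep k 1 zero_le_one le_rfl
  -- `a 0` may be `⊤`, but the step with `α = 1` ignores it (`0 * ⊤ = 0` in `EReal`)
  have hfin (k : ℕ) (hk : 1 ≤ k) : a k = ((a k).toReal : EReal) := by
    obtain ⟨k, rfl⟩ := Nat.exists_eq_add_of_le' hk
    exact (EReal.coe_toReal (ne_top_of_le_ne_top (EReal.coe_ne_top _) (hfirst k)) (hbot _)).symm
  have hrate := le_two_mul_div_of_interpolated_descent (e := fun k => (a k).toReal - s) hc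
    ?base ?step
  case base =>
    have h₁ := hfirst 0
    rw [hfin 1 le_rfl, EReal.coe_le_coe_iff] at h₁
    show _ - s ≤ _
    linarith
  case step =>
    intro k hk α hα₀ hα₁
    have h := hstep k α hα₀ hα₁
    rw [hfin (k + 1) (by omega), hfin k hk, ← EReal.coe_mul, ← EReal.coe_add,
      EReal.coe_le_coe_iff] at h
    show _ - s ≤ (1 - α) * (_ - s) + _
    linarith
  intro k hk
  rw [hfin k hk, EReal.coe_le_coe_iff]
  linarith [hrate k hk]

theorem abstract_sublinear_rate_general
    {m : ℕ} (γ D : ℝ) (hγ : 0 < γ)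
    (ψ : E m → EReal) (hψ : ProperClosedConvex ψ)
    (Ystar : Set (E m)) (hY : Ystar = {w : E m | ∀ v, ψ w ≤ ψ v})
    (y : ℕ → E m)
    (hdec1 : ∀ k, ψ (y (k + 1)) ≤ moreauEnv γ ψ (y k))
    (hdec2 : ∀ k, ψ (y (k + 1)) ≤ ψ (y k))
    (hdist : ∀ z : E m, ψ z ≤ ψ (y 0) → ∃ w ∈ Ystar, ‖z - w‖ ≤ D) :
    ∀ k : ℕ, 1 ≤ k →
      ψ (y k) ≤ (⨅ w : E m, ψ w) + ((2 * D ^ 2 / (γ * k) : ℝ) : EReal) := by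
  subst hY
  obtain ⟨w₀, hw₀, -⟩ := hdist (y 0) le_rfl
  obtain ⟨s, hs⟩ : ∃ s : ℝ, ψ w₀ = s :=
    let ⟨x, hx⟩ := hψ.1.1
    ⟨_, (EReal.coe_toReal (ne_top_of_le_ne_top hx (hw₀ x)) (hψ.1.2 w₀)).symm⟩
  have hinf : ⨅ w, ψ w = s := hs ▸ le_antisymm (iInf_le _ w₀) (le_iInf hw₀)
  have hstep (k : ℕ) (α : ℝ) (hα₀ : 0 ≤ α) (hα₁ : α ≤ 1) :
      ψ (y (k + 1)) ≤ ((1 - α : ℝ) : EReal) * ψ (y k)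
        + ((α * s + α ^ 2 * (D ^ 2 / γ) / 2 : ℝ) : EReal) := by
    obtain ⟨w, hw, hyw⟩ := hdist (y k) (antitone_nat_of_succ_le (f := ψ ∘ y) hdec2 k.zero_le)
    convert hψ.2.2.le_of_le_moreauEnv hγ.le (hdec1 k)
      (le_antisymm (hs ▸ hw w₀) (hs ▸ hw₀ w)) hyw hα₀ hα₁ using 4
    ring
  intro k hk
  convert le_coe_add_two_mul_div_of_interpolated_descent (by positivity) (fun k ↦ hψ.1.2 (y k))
    hstep k hk using 1
  rw [hinf, ← EReal.coe_add]
  congr 2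
  ring

/-- Abstract sublinear rate: if a sequence satisfies the Moreau-envelope descent
inequality and is monotone, with minimizers within distance `D` on the initial
sublevel set, then `ψ(y^k) - inf ψ ≤ 2D²/(γ k)`. -/
theorem abstract_sublinear_rate
    {m : ℕ} (γ D : ℝ) (hγ : 0 < γ) (hD : 0 < D)
    (ψ : E m → EReal) (hψ : ProperClosedConvex ψ)
    (Ystar : Set (E m)) (hY : Ystar = {w : E m | ∀ v, ψ w ≤ ψ v})
    (hne : Ystar.Nonempty) (hbd : Bornology.IsBounded Ystar)
    (y : ℕ → E m)
    (hdec1 : ∀ k, ψ (y (k + 1)) ≤ moreauEnv γ ψ (y k))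
    (hdec2 : ∀ k, ψ (y (k + 1)) ≤ ψ (y k))
    (hdist : ∀ z : E m, ψ z ≤ ψ (y 0) → ∃ w ∈ Ystar, ‖z - w‖ ≤ D) :
    ∀ k : ℕ, 1 ≤ k →
      ψ (y k) ≤ (⨅ w : E m, ψ w) + ((2 * D ^ 2 / (γ * k) : ℝ) : EReal) :=
  abstract_sublinear_rate_general γ D hγ ψ hψ Ystar hY y hdec1 hdec2 hdist
end
end

section
/- Let ψ : ℝ^m → ℝ ∪ {∞} be proper closed convex with minimizer set Y⋆ ≠ ∅, and suppose a sequence {y^k} with residuals r^k satisfies (i) ψ(y^k) - ψ(y^{k+1}) ≥ (γ/2)‖r^k‖², (ii) ψ(y^{k+1}) - inf ψ ≤ ⟨-r^k, Π_{Y⋆}(y^k) - y^k⟩ - (γ/2)‖r^k‖², and (iii) the error bound dist(y^k, Y⋆) ≤ β‖r^k‖ for all k. Then ψ(y^{k+1}) - inf ψ ≤ (1 - γ/(2β)) (ψ(y^k) - inf ψ), i.e., ψ(y^k) converges Q-linearly to inf ψ. -/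
open scoped InnerProductSpace RealInnerProductSpace
open Filter Topology

noncomputable section

lemma key_real_abs (γ β c a b s : ℝ) (hγ : 0 < γ) (hβ : 0 < β) (hs : 0 < s)
    (hca : 0 ≤ a - c) (hI : a - c ≤ (β - γ/2) * s)
    (hb : a + γ/2 * s ≤ b) : a - c ≤ (1 - γ/(2*β)) * (b - c) := by
  have hβ2 : 0 ≤ β - γ/2 := by nlinarith
  have key : β * ((1 - γ/(2*β)) * (b - c) - (a - c)) =
      (β - γ/2) * (b - c) - β * (a - c) := by field_simp
  nlinarith [mul_nonneg hβ2 (by linarith : (0:ℝ) ≤ b - c - (a - c) - γ/2*s),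
    mul_nonneg (by linarith : (0:ℝ) ≤ γ/2) (by linarith : (0:ℝ) ≤ (β - γ/2)*s - (a-c))]

/-- Abstract Q-linear rate: sufficient decrease, the envelope inequality at the
projection, and an error bound together give a linear contraction of the dual
gap with factor `1 - γ/(2β)`. -/
theorem abstract_linear_rate
    {m : ℕ} (γ β : ℝ) (hγ : 0 < γ) (hβ : 0 < β)
    (ψ : E m → EReal) (hψ : ProperClosedConvex ψ)
    (Ystar : Set (E m)) (hY : Ystar = {w : E m | ∀ v, ψ w ≤ ψ v})
    (hne : Ystar.Nonempty)
    (y r p : ℕ → E m)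
    (hp : ∀ k, p k ∈ Ystar ∧ ∀ w ∈ Ystar, ‖y k - p k‖ ≤ ‖y k - w‖)
    (h1 : ∀ k, ψ (y (k + 1)) + ((γ / 2 * ‖r k‖ ^ 2 : ℝ) : EReal) ≤ ψ (y k))
    (h2 : ∀ k, ψ (y (k + 1)) ≤ (⨅ w : E m, ψ w)
        + ((⟪-(r k), p k - y k⟫_ℝ - γ / 2 * ‖r k‖ ^ 2 : ℝ) : EReal))
    (h3 : ∀ k, ‖y k - p k‖ ≤ β * ‖r k‖) :
    ∀ k : ℕ,
      ψ (y (k + 1)) - (⨅ w : E m, ψ w) ≤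
        ((1 - γ / (2 * β) : ℝ) : EReal) * (ψ (y k) - (⨅ w : E m, ψ w)) := by
  obtain ⟨⟨⟨x0, hx0⟩, hbot⟩, -, -⟩ := hψ
  intro k
  have hpm : ∀ v, ψ (p k) ≤ ψ v := by have := (hp k).1; rwa [hY] at this
  have hinf : (⨅ w : E m, ψ w) = ψ (p k) :=
    le_antisymm (iInf_le _ _) (le_iInf hpm)
  have hPtop : ψ (p k) ≠ ⊤ := fun h => hx0 (top_le_iff.mp (h ▸ hpm x0))
  obtain ⟨c, hc⟩ : ∃ c : ℝ, ψ (p k) = (c : EReal) := by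
    lift ψ (p k) to ℝ using ⟨hPtop, hbot _⟩ with c; exact ⟨c, rfl⟩
  set s : ℝ := ‖r k‖ ^ 2 with hs_def
  set I : ℝ := ⟪-(r k), p k - y k⟫_ℝ with hI_def
  have h2' := h2 k
  rw [hinf, hc, ← EReal.coe_add] at h2'
  have hatop : ψ (y (k+1)) ≠ ⊤ := fun h =>
    (EReal.coe_lt_top _).not_ge (h ▸ h2')
  obtain ⟨a, ha⟩ : ∃ a : ℝ, ψ (y (k+1)) = (a : EReal) := by
    lift ψ (y (k+1)) to ℝ using ⟨hatop, hbot _⟩ with a; exact ⟨a, rfl⟩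
  rw [ha, EReal.coe_le_coe_iff] at h2'
  have hca : c ≤ a := by
    have := hpm (y (k+1)); rw [hc, ha, EReal.coe_le_coe_iff] at this; exact this
  have hIb : I ≤ β * s := by
    calc I ≤ ‖-(r k)‖ * ‖p k - y k‖ := real_inner_le_norm _ _
    _ = ‖r k‖ * ‖y k - p k‖ := by rw [norm_neg, norm_sub_rev]
    _ ≤ ‖r k‖ * (β * ‖r k‖) :=
        mul_le_mul_of_nonneg_left (h3 k) (norm_nonneg _)
    _ = β * s := by rw [hs_def]; ring
  have hIb' : a - c ≤ (β - γ/2) * s := by nlinarith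
  rw [hinf, hc, ha]
  by_cases hr : r k = 0
  · -- r = 0 : y k = p k and a = c
    have hyp : y k = p k := by
      have := h3 k; rw [hr, norm_zero, mul_zero] at this
      have := le_antisymm this (norm_nonneg _)
      rwa [norm_eq_zero, sub_eq_zero] at this
    have hs0 : s = 0 := by simp [hs_def, hr]
    have hI0 : I = 0 := by simp [hI_def, hr]
    have h2'' : a ≤ c := by rw [hr] at h2'; simpa using h2'
    have hac : a = c := le_antisymm h2'' hca
    rw [hyp, hc, hac, ← EReal.coe_sub, sub_self, EReal.coe_zero, mul_zero]
  · have hs0 : 0 < s := by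
      have := norm_pos_iff.mpr hr; positivity
    rcases eq_top_or_lt_top (ψ (y k)) with hb | hb
    · -- ψ (y k) = ⊤
      rw [hb, EReal.top_sub_coe]
      rcases lt_or_eq_of_le (show γ/(2*β) ≤ 1 by
        rw [div_le_one (by linarith)]; nlinarith) with hθ | hθ
      · rw [EReal.coe_mul_top_of_pos (by linarith)]
        exact le_top
      · have hβγ : β = γ/2 := by field_simp at hθ; linarith
        have hac : a = c := le_antisymm (by nlinarith) hca
        rw [hac, ← EReal.coe_sub, sub_self, EReal.coe_zero]
        rw [hθ, sub_self]
        simp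
    · obtain ⟨b, hbb⟩ : ∃ b : ℝ, ψ (y k) = (b : EReal) := by
        lift ψ (y k) to ℝ using ⟨hb.ne, hbot _⟩ with b; exact ⟨b, rfl⟩
      have h1' := h1 k
      rw [ha, hbb, ← EReal.coe_add, EReal.coe_le_coe_iff] at h1'
      rw [hbb, ← EReal.coe_sub, ← EReal.coe_sub, ← EReal.coe_mul,
        EReal.coe_le_coe_iff]
      exact key_real_abs γ β c a b s hγ hβ hs0 (by linarith) hIb' h1'
end
end

section
/- Under the standing assumptions, suppose ψ_γ is twice differentiable at the unique dual minimizer y⋆ with positive definite Hessian H⋆, and {y^k} → y⋆ with directions {d^k} satisfying ‖y^k + d^k - y⋆‖/‖y^k - y⋆‖ → 0. Then (ψ_γ(y^k + d^k) - inf ψ_γ)/(ψ_γ(y^k) - inf ψ_γ) → 0; in particular, ψ_γ(y^k + d^k) ≤ ψ_γ(y^k) for all sufficiently large k (unit stepsize is eventually accepted). -/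
open scoped InnerProductSpace RealInnerProductSpace
open Filter Topology

noncomputable section

/-- Superlinear directions yield superlinear decrease of the envelope and
eventual acceptance of the unit stepsize. -/
theorem superlinear_directions_unit_stepsize
    {m : ℕ} (φ : E m → ℝ) (ystar : E m)
    (hmin : ∀ y, φ ystar ≤ φ y)
    (H : E m →L[ℝ] E m)
    (htaylor : (fun y : E m => φ y - φ ystar - (1 / 2) * ⟪H (y - ystar), y - ystar⟫_ℝ)
        =o[nhds ystar] fun y : E m => ‖y - ystar‖ ^ 2)
    (hposdef : ∃ lam > (0:ℝ), ∀ v : E m, lam * ‖v‖ ^ 2 ≤ ⟪H v, v⟫_ℝ)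
    (y d : ℕ → E m)
    (hconv : Tendsto y atTop (nhds ystar))
    (hne : ∀ k, y k ≠ ystar)
    (hsuper : Tendsto (fun k : ℕ => ‖y k + d k - ystar‖ / ‖y k - ystar‖)
        atTop (nhds 0)) :
    Tendsto (fun k : ℕ => (φ (y k + d k) - φ ystar) / (φ (y k) - φ ystar))
        atTop (nhds 0) ∧
    (∀ᶠ k in atTop, φ (y k + d k) ≤ φ (y k)) := by
  obtain ⟨lam, hlam, hlow⟩ := hposdef
  set C : ℝ := ‖H‖ / 2 + lam / 8 with hC
  have hCpos : 0 < C := by positivity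
  -- little-o eventual bound with ε = lam/8
  have ho := htaylor.def (show (0:ℝ) < lam / 8 by positivity)
  have ho' : ∀ᶠ z in nhds ystar,
      |φ z - φ ystar - (1 / 2) * ⟪H (z - ystar), z - ystar⟫_ℝ|
        ≤ lam / 8 * ‖z - ystar‖ ^ 2 := by
    filter_upwards [ho] with z hz
    simpa [abs_of_nonneg (sq_nonneg ‖z - ystar‖)] using hz
  -- norms tendsto
  have hr : Tendsto (fun k => ‖y k - ystar‖) atTop (nhds 0) := by
    have : Tendsto (fun k => y k - ystar) atTop (nhds (ystar - ystar)) :=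
      hconv.sub tendsto_const_nhds
    simpa using this.norm
  have hs : Tendsto (fun k => ‖y k + d k - ystar‖) atTop (nhds 0) := by
    have h1 : Tendsto (fun k => ‖y k + d k - ystar‖ / ‖y k - ystar‖ * ‖y k - ystar‖)
        atTop (nhds 0) := by simpa using hsuper.mul hr
    refine h1.congr fun k => ?_
    exact div_mul_cancel₀ _ (norm_ne_zero_iff.mpr (sub_ne_zero_of_ne (hne k)))
  have hconv2 : Tendsto (fun k => y k + d k) atTop (nhds ystar) :=
    tendsto_iff_norm_sub_tendsto_zero.mpr hs
  -- eventual Taylor bounds along the sequences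
  have hA := hconv.eventually ho'
  have hB := hconv2.eventually ho'
  -- denominator lower bound
  have hDpos : ∀ᶠ k in atTop,
      lam / 4 * ‖y k - ystar‖ ^ 2 ≤ φ (y k) - φ ystar ∧ 0 < φ (y k) - φ ystar := by
    filter_upwards [hA] with k hk
    have hr0 : 0 < ‖y k - ystar‖ := norm_pos_iff.mpr (sub_ne_zero_of_ne (hne k))
    have hQ : lam / 2 * ‖y k - ystar‖ ^ 2
        ≤ (1 / 2) * ⟪H (y k - ystar), y k - ystar⟫_ℝ := by
      have := hlow (y k - ystar)
      nlinarith
    have habs := abs_le.mp hk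
    constructor
    · nlinarith
    · nlinarith [sq_nonneg ‖y k - ystar‖, mul_pos (mul_pos (by linarith : (0:ℝ) < lam / 4) hr0) hr0]
  -- numerator upper bound
  have hNle : ∀ᶠ k in atTop,
      φ (y k + d k) - φ ystar ≤ C * ‖y k + d k - ystar‖ ^ 2 := by
    filter_upwards [hB] with k hk
    have hQ : ⟪H (y k + d k - ystar), y k + d k - ystar⟫_ℝ
        ≤ ‖H‖ * ‖y k + d k - ystar‖ ^ 2 := by
      calc ⟪H (y k + d k - ystar), y k + d k - ystar⟫_ℝ
          ≤ ‖H (y k + d k - ystar)‖ * ‖y k + d k - ystar‖ := real_inner_le_norm _ _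
        _ ≤ (‖H‖ * ‖y k + d k - ystar‖) * ‖y k + d k - ystar‖ := by
            gcongr; exact H.le_opNorm _
        _ = ‖H‖ * ‖y k + d k - ystar‖ ^ 2 := by ring
    have habs := abs_le.mp hk
    simp only [hC]
    nlinarith
  have hN0 : ∀ k, 0 ≤ φ (y k + d k) - φ ystar := fun k => sub_nonneg.mpr (hmin _)
  -- ratio bound
  have hbound : ∀ᶠ k in atTop,
      (φ (y k + d k) - φ ystar) / (φ (y k) - φ ystar)
        ≤ 4 * C / lam * (‖y k + d k - ystar‖ / ‖y k - ystar‖) ^ 2 := by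
    filter_upwards [hDpos, hNle] with k hD hN
    have hr0 : 0 < ‖y k - ystar‖ := norm_pos_iff.mpr (sub_ne_zero_of_ne (hne k))
    have hden : 0 < lam / 4 * ‖y k - ystar‖ ^ 2 := by positivity
    have h1 : (φ (y k + d k) - φ ystar) / (φ (y k) - φ ystar)
        ≤ (C * ‖y k + d k - ystar‖ ^ 2) / (lam / 4 * ‖y k - ystar‖ ^ 2) := by
      apply div_le_div₀ (by positivity) hN hden hD.1
    have h2 : (C * ‖y k + d k - ystar‖ ^ 2) / (lam / 4 * ‖y k - ystar‖ ^ 2)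
        = 4 * C / lam * (‖y k + d k - ystar‖ / ‖y k - ystar‖) ^ 2 := by
      rw [div_pow]
      field_simp
    linarith [h1, h2.le, h2.ge]
  have hbnd0 : Tendsto (fun k : ℕ =>
      4 * C / lam * (‖y k + d k - ystar‖ / ‖y k - ystar‖) ^ 2) atTop (nhds 0) := by
    have := (hsuper.pow 2).const_mul (4 * C / lam)
    simpa using this
  have hratio0 : ∀ᶠ k in atTop,
      0 ≤ (φ (y k + d k) - φ ystar) / (φ (y k) - φ ystar) := by
    filter_upwards [hDpos] with k hD
    exact div_nonneg (hN0 k) hD.2.le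
  have hmain : Tendsto (fun k : ℕ =>
      (φ (y k + d k) - φ ystar) / (φ (y k) - φ ystar)) atTop (nhds 0) :=
    squeeze_zero' hratio0 hbound hbnd0
  refine ⟨hmain, ?_⟩
  have hlt1 : ∀ᶠ k in atTop,
      (φ (y k + d k) - φ ystar) / (φ (y k) - φ ystar) < 1 :=
    hmain.eventually (gt_mem_nhds one_pos)
  filter_upwards [hlt1, hDpos] with k h1 hD
  have := (div_lt_one hD.2).mp h1
  linarith
end
end

section
/- Let R : ℝ^m → ℝ^m be strictly differentiable at y⋆ with R(y⋆) = 0 and nonsingular Jacobian J⋆. Suppose y^k → y⋆, d^k = B_k^{-1}(-R(y^k)) for nonsingular matrices B_k, R(y^k) → 0, and the Dennis–Moré condition ‖(B_k - J⋆)d^k‖/‖d^k‖ → 0 holds. Then ‖y^k + d^k - y⋆‖/‖y^k - y⋆‖ → 0, i.e., the directions are superlinearly convergent. -/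
open scoped InnerProductSpace RealInnerProductSpace
open Filter Topology

noncomputable section

/-! With `e = y - y⋆`, the step equation `B d = -R(y)` gives
`J (e + d) = -(R y - J e) - (B d - J d)`: a Taylor remainder, `o(e)`, minus the Dennis–Moré
defect, `o(d)`. Since `J` is bounded below, `J d = B d - (B d - J d)` with the defect `o(d)` forces
`d = O(B d) = O(R y) = O(e)`; hence `J (e + d) = o(e)`, and bounding `J` below once more gives
`e + d = o(e)`. -/

open Asymptotics

section DennisMore

variable {ι F G : Type*} [NormedAddCommGroup F] [NormedAddCommGroup G] {l : Filter ι}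

theorem isBigO_apply_of_le_norm {α : ℝ} (hα : 0 < α) {J : F → G}
    (hJ : ∀ v, α * ‖v‖ ≤ ‖J v‖) (u : ι → F) : u =O[l] fun k => J (u k) :=
  IsBigO.of_bound α⁻¹ <| Eventually.of_forall fun k => by
    rw [inv_mul_eq_div, le_div_iff₀ hα, mul_comm]
    exact hJ (u k)

theorem isLittleO_of_tendsto_norm_div {f : ι → F} {g : ι → G} (hfg : ∀ k, g k = 0 → f k = 0)
    (h : Tendsto (fun k => ‖f k‖ / ‖g k‖) l (𝓝 0)) : f =o[l] g :=
  isLittleO_norm_norm.mp <|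
    (isLittleO_iff_tendsto fun k hk => by rw [hfg k (norm_eq_zero.mp hk), norm_zero]).mpr h

theorem isBigO_of_isLittleO_sub_apply {α : ℝ} (hα : 0 < α) {J : F → G}
    (hJ : ∀ v, α * ‖v‖ ≤ ‖J v‖) {d : ι → F} {b : ι → G}
    (hDM : (fun k => b k - J (d k)) =o[l] d) : d =O[l] b := by
  have hd : d =O[l] fun k => J (d k) := isBigO_apply_of_le_norm hα hJ d
  have hJd : (fun k => J (d k)) =Θ[l] b := by
    simpa only [Pi.add_def, sub_add_cancel] using (hDM.trans_isBigO hd).right_isTheta_add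
  exact hd.trans hJd.isBigO

variable [NormedSpace ℝ F] [NormedSpace ℝ G]

theorem isLittleO_newton_error_of_dennisMore {R : F → G} {J : F →L[ℝ] G} {x : F}
    (hR : HasFDerivAt R J x) (hRx : R x = 0) {α : ℝ} (hα : 0 < α)
    (hJ : ∀ v, α * ‖v‖ ≤ ‖J v‖) {y d : ι → F} {B : ι → F →L[ℝ] G}
    (hy : Tendsto y l (𝓝 x)) (hB : ∀ k, B k (d k) = -R (y k))
    (hDM : (fun k => B k (d k) - J (d k)) =o[l] d) :
    (fun k => y k + d k - x) =o[l] fun k => y k - x := by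
  have htaylor : (fun k => R (y k) - J (y k - x)) =o[l] fun k => y k - x := by
    simpa [hRx, Function.comp_def] using hR.isLittleO.comp_tendsto hy
  have hres : (fun k => R (y k)) =O[l] fun k => y k - x := by
    simpa using htaylor.isBigO.add (J.isBigO_comp _ l)
  have hstep : d =O[l] fun k => y k - x :=
    (isBigO_of_isLittleO_sub_apply hα hJ hDM).trans (by simpa [hB] using hres)
  have hsplit : ∀ k, J (y k + d k - x) = -(R (y k) - J (y k - x)) - (B k (d k) - J (d k)) := by
    intro k
    rw [add_sub_right_comm, map_add, hB]
    abel
  have hmodel : (fun k => J (y k + d k - x)) =o[l] fun k => y k - x := by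
    simpa only [hsplit] using htaylor.neg_left.sub (hDM.trans_isBigO hstep)
  exact (isBigO_apply_of_le_norm hα hJ _).trans_isLittleO hmodel

end DennisMore

theorem dennis_more_superlinear_general
    {m : ℕ} (R : E m → E m) (ystar : E m) (J : E m →L[ℝ] E m)
    (hstrict : HasStrictFDerivAt R J ystar)
    (hzero : R ystar = 0)
    (hnonsing : ∃ α > (0:ℝ), ∀ v : E m, α * ‖v‖ ≤ ‖J v‖)
    (y d : ℕ → E m) (B : ℕ → E m →L[ℝ] E m)
    (hconv : Tendsto y atTop (nhds ystar))
    (hB : ∀ k, B k (d k) = -(R (y k)))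
    (hDM : Tendsto (fun k : ℕ => ‖B k (d k) - J (d k)‖ / ‖d k‖) atTop (nhds 0)) :
    Tendsto (fun k : ℕ => ‖y k + d k - ystar‖ / ‖y k - ystar‖) atTop (nhds 0) := by
  obtain ⟨α, hα, hJ⟩ := hnonsing
  have hDM' : (fun k => B k (d k) - J (d k)) =o[atTop] d :=
    isLittleO_of_tendsto_norm_div (fun k hk => by simp [hk]) hDM
  exact (isLittleO_newton_error_of_dennisMore hstrict.hasFDerivAt hzero hα hJ hconv hB
    hDM').norm_norm.tendsto_div_nhds_zero

/-- Dennis-Moré theorem: quasi-Newton directions satisfying the Dennis-Moré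
condition are superlinearly convergent. -/
theorem dennis_more_superlinear
    {m : ℕ} (R : E m → E m) (ystar : E m) (J : E m →L[ℝ] E m)
    (hstrict : HasStrictFDerivAt R J ystar)
    (hzero : R ystar = 0)
    (hnonsing : ∃ α > (0:ℝ), ∀ v : E m, α * ‖v‖ ≤ ‖J v‖)
    (y d : ℕ → E m) (B : ℕ → E m →L[ℝ] E m)
    (hconv : Tendsto y atTop (nhds ystar))
    (hne : ∀ k, y k ≠ ystar) (hd : ∀ k, d k ≠ 0)
    (hB : ∀ k, B k (d k) = -(R (y k)))
    (hres : Tendsto (fun k : ℕ => R (y k)) atTop (nhds 0))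
    (hDM : Tendsto (fun k : ℕ => ‖B k (d k) - J (d k)‖ / ‖d k‖) atTop (nhds 0)) :
    Tendsto (fun k : ℕ => ‖y k + d k - ystar‖ / ‖y k - ystar‖) atTop (nhds 0) :=
  dennis_more_superlinear_general R ystar J hstrict hzero hnonsing y d B hconv hB hDM
end
end
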